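/- arXiv:1605.07234 — 13 statements merged into one kernel-verified Lean document; each statement's English description precedes it below -/
import Mathlib

section
/- Let A denote the average of f(σ,π) over all m!·n! pairs of permutations. Then the number of pairs (σ,π) with f(σ,π) ≥ A is at least (m-1)!·(n-1)!. -/
/-! Right multiplication by the cyclic shifts `i ↦ i + a` of `Fin m` and `k ↦ k + b` of `Fin n`
sends `(σ, π)` to `mn` pairs. As `a` ranges, `σ (i + a)` takes every value once, so the sum of `f`
over these `mn` pairs is the same for every `(σ, π)`; averaging over all pairs shows that it is
`mn · A`. Hence every pair is a shift of a pair in `S = {f ≥ A}`, and `m! n! ≤ mn · #S`. -/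

open scoped Classical

open Finset

section Averaging

variable {α ι : Type*} [Fintype α] [Fintype ι]

theorem card_le_card_mul_card_of_forall_exists_apply_mem (g : ι → α ≃ α) (S : Finset α)
    (hS : ∀ x, ∃ i, g i x ∈ S) : Fintype.card α ≤ Fintype.card ι * #S := by
  have hcover : (univ : Finset α) ⊆ univ.biUnion fun i => S.map (g i).symm.toEmbedding := by
    intro x _
    obtain ⟨i, hi⟩ := hS x
    exact mem_biUnion.2 ⟨i, mem_univ i, mem_map_equiv.2 hi⟩
  calc Fintype.card α ≤ #(univ.biUnion fun i => S.map (g i).symm.toEmbedding) :=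
        card_le_card hcover
    _ ≤ Fintype.card ι * #S :=
      card_biUnion_le_card_mul _ _ _ fun i _ => (card_map _).le

theorem card_mul_sum_eq_of_forall_sum_apply_eq (g : ι → α ≃ α) (f : α → ℝ) (E : ℝ)
    (hE : ∀ x, ∑ i, f (g i x) = E) :
    Fintype.card ι * ∑ x, f x = Fintype.card α * E := by
  calc (Fintype.card ι : ℝ) * ∑ x, f x = ∑ i, ∑ x, f (g i x) := by
        simp only [Equiv.sum_comp, sum_const, card_univ, nsmul_eq_mul]
    _ = ∑ x, ∑ i, f (g i x) := sum_comm
    _ = Fintype.card α * E := by simp only [hE, sum_const, card_univ, nsmul_eq_mul]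

theorem card_le_card_mul_card_filter_average_le [Nonempty ι] (g : ι → α ≃ α) (f : α → ℝ)
    (E : ℝ) (hE : ∀ x, ∑ i, f (g i x) = E) :
    Fintype.card α ≤ Fintype.card ι * #{x | (∑ y, f y) / Fintype.card α ≤ f x} := by
  refine card_le_card_mul_card_of_forall_exists_apply_mem g _ fun x => ?_
  have : Nonempty α := ⟨x⟩
  have hsum : ∑ _i : ι, (∑ y, f y) / Fintype.card α = ∑ i, f (g i x) := by
    rw [sum_const, card_univ, nsmul_eq_mul, hE, mul_div_assoc',
      card_mul_sum_eq_of_forall_sum_apply_eq g f E hE, mul_div_cancel_left₀ _ (by positivity)]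
  obtain ⟨i, -, hi⟩ := exists_le_of_sum_le univ_nonempty hsum.le
  exact ⟨i, mem_filter.2 ⟨mem_univ _, hi⟩⟩

end Averaging

def bilinearAssignmentCost {M N : Type*} [Fintype M] [Fintype N] (q : M → M → N → N → ℝ)
    (c : M → M → ℝ) (d : N → N → ℝ) (σ : Equiv.Perm M) (π : Equiv.Perm N) : ℝ :=
  (∑ i, ∑ k, q i (σ i) k (π k)) + (∑ i, c i (σ i)) + (∑ k, d k (π k))

section Shift

variable {M N : Type*} [AddGroup M] [Fintype M] [AddGroup N] [Fintype N]

theorem Equiv.Perm.sum_apply_add {β : Type*} [AddCommMonoid β] (σ : Equiv.Perm M) (i : M)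
    (h : M → β) :
    ∑ a, h (σ (i + a)) = ∑ j, h j :=
  ((Equiv.addLeft i).trans σ).sum_comp h

theorem sum_sum_bilinearAssignmentCost_mul_addRight (q : M → M → N → N → ℝ)
    (c : M → M → ℝ) (d : N → N → ℝ) (σ : Equiv.Perm M) (π : Equiv.Perm N) :
    ∑ a, ∑ b, bilinearAssignmentCost q c d (σ * Equiv.addRight a) (π * Equiv.addRight b) =
      (∑ i, ∑ j, ∑ k, ∑ l, q i j k l) + Fintype.card N • (∑ i, ∑ j, c i j)
        + Fintype.card M • (∑ k, ∑ l, d k l) := by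
  have hq : ∑ a, ∑ b, ∑ i, ∑ k, q i (σ (i + a)) k (π (k + b)) =
      ∑ i, ∑ j, ∑ k, ∑ l, q i j k l := by
    calc _ = ∑ a, ∑ i, ∑ k, ∑ l, q i (σ (i + a)) k l := by
          refine sum_congr rfl fun a _ => ?_
          rw [sum_comm]
          refine sum_congr rfl fun i _ => ?_
          rw [sum_comm]
          exact sum_congr rfl fun k _ => π.sum_apply_add k _
      _ = _ := by
          rw [sum_comm]
          exact sum_congr rfl fun i _ => σ.sum_apply_add i fun j => ∑ k, ∑ l, q i j k l
  have hc :
      ∑ a, ∑ _b : N, ∑ i, c i (σ (i + a)) = Fintype.card N • ∑ i, ∑ j, c i j := by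
    simp only [sum_const, card_univ, ← smul_sum]
    rw [sum_comm]
    exact congrArg _ (sum_congr rfl fun i _ => σ.sum_apply_add i (c i))
  have hd :
      ∑ _a : M, ∑ b, ∑ k, d k (π (k + b)) = Fintype.card M • ∑ k, ∑ l, d k l := by
    rw [sum_const, card_univ, sum_comm]
    exact congrArg _ (sum_congr rfl fun k _ => π.sum_apply_add k (d k))
  simp only [bilinearAssignmentCost, Equiv.Perm.mul_apply, Equiv.coe_addRight,
    sum_add_distrib, hq, hc, hd]

end Shift

theorem stmt_2 (m n : ℕ) (hm : 0 < m) (hn : 0 < n)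
    (q : Fin m → Fin m → Fin n → Fin n → ℝ)
    (c : Fin m → Fin m → ℝ) (d : Fin n → Fin n → ℝ)
    (f : Equiv.Perm (Fin m) → Equiv.Perm (Fin n) → ℝ)
    (hf : ∀ σ π, f σ π =
      (∑ i, ∑ k, q i (σ i) k (π k)) + (∑ i, c i (σ i)) + (∑ k, d k (π k)))
    (A : ℝ)
    (hA : A = (∑ σ : Equiv.Perm (Fin m), ∑ π : Equiv.Perm (Fin n), f σ π)
        / ((Nat.factorial m * Nat.factorial n : ℕ) : ℝ)) :
    Nat.factorial (m - 1) * Nat.factorial (n - 1) ≤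
      (Finset.univ.filter
        (fun p : Equiv.Perm (Fin m) × Equiv.Perm (Fin n) => A ≤ f p.1 p.2)).card := by
  obtain ⟨s, rfl⟩ : ∃ s, m = s + 1 := ⟨m - 1, by omega⟩
  obtain ⟨t, rfl⟩ : ∃ t, n = t + 1 := ⟨n - 1, by omega⟩
  obtain rfl : f = bilinearAssignmentCost q c d := funext₂ hf
  let shift (ab : Fin (s + 1) × Fin (t + 1)) :
      Equiv.Perm (Fin (s + 1)) × Equiv.Perm (Fin (t + 1)) ≃
        Equiv.Perm (Fin (s + 1)) × Equiv.Perm (Fin (t + 1)) :=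
    (Equiv.mulRight (Equiv.addRight ab.1)).prodCongr (Equiv.mulRight (Equiv.addRight ab.2))
  have hcount := card_le_card_mul_card_filter_average_le shift
    (fun p => bilinearAssignmentCost q c d p.1 p.2) _ fun p => by
      rw [Fintype.sum_prod_type]
      exact sum_sum_bilinearAssignmentCost_mul_addRight q c d p.1 p.2
  have haverage : (∑ p : Equiv.Perm (Fin (s + 1)) × Equiv.Perm (Fin (t + 1)),
      bilinearAssignmentCost q c d p.1 p.2) /
      Fintype.card (Equiv.Perm (Fin (s + 1)) × Equiv.Perm (Fin (t + 1))) = A := by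
    rw [hA, Fintype.sum_prod_type]
    simp [Fintype.card_perm]
  rw [haverage] at hcount
  simp only [Fintype.card_prod, Fintype.card_perm, Fintype.card_fin,
    Nat.factorial_succ] at hcount
  simp only [Nat.add_sub_cancel]
  exact Nat.le_of_mul_le_mul_left (by linarith) (Nat.mul_pos s.succ_pos t.succ_pos)
end

section
/- Symmetrically to the previous statement, the number of pairs (σ,π) with f(σ,π) ≤ A (the average objective value) is at least (m-1)!·(n-1)!. -/
/-!
Right-translating `(σ, π)` by the cyclic shifts `(i ↦ i + a, k ↦ k + b)` permutes the images
`σ i`, `π k` through all values, so the `m n` translates of any pair have the same total value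
of the objective, namely `m n A`. Hence every such family of translates contains a pair with
value at most `A`, and as the `m! n!` pairs fall into families of size `m n`, this gives at least
`(m-1)! (n-1)!` such pairs.
-/

open Finset

open scoped Classical

section Translates

variable {G K : Type*} [Group G] [Fintype G] [Fintype K] (t : K → G)

theorem sum_sum_mul_translate {M : Type*} [AddCommMonoid M] (f : G → M) :
    ∑ g, ∑ k, f (g * t k) = Fintype.card K • ∑ g, f g := by
  have h_shift : ∀ k, ∑ g, f (g * t k) = ∑ g, f g := fun k =>
    Equiv.sum_comp (Equiv.mulRight (t k)) f
  rw [sum_comm]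
  simp only [h_shift, sum_const, card_univ]

theorem exists_translate_le_average {𝕜 : Type*} [Field 𝕜] [LinearOrder 𝕜] [IsStrictOrderedRing 𝕜]
    [Nonempty K] (f : G → 𝕜) (C : 𝕜) (hC : ∀ g, ∑ k, f (g * t k) = C) (g : G) :
    ∃ k, f (g * t k) ≤ (∑ x, f x) / Fintype.card G := by
  have hC_eq : C = Fintype.card K * ((∑ x, f x) / Fintype.card G) := by
    have h := sum_sum_mul_translate t f
    simp only [hC, sum_const, card_univ, nsmul_eq_mul] at h
    field_simp
    linear_combination h
  obtain ⟨k, -, hk⟩ := exists_le_of_sum_le (s := univ) (f := fun k => f (g * t k))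
    (g := fun _ => (∑ x, f x) / Fintype.card G) univ_nonempty
    (by rw [hC g, hC_eq, sum_const, card_univ, nsmul_eq_mul])
  exact ⟨k, hk⟩

/-- Every `g` lies in the fibre of `g ↦ g * t k` over some good point, and each fibre has at most
`card K` elements. -/
theorem card_le_card_mul_card_filter_of_exists_translate (P : G → Prop)
    (hP : ∀ g, ∃ k, P (g * t k)) :
    Fintype.card G ≤ Fintype.card K * #{g | P g} := by
  choose k hk using hP
  have h_image : univ.image (fun g => g * t (k g)) ⊆ ({g | P g} : Finset G) := by
    simpa [subset_iff] using hk
  have h_fibre : ∀ y, #{g | g * t (k g) = y} ≤ Fintype.card K := fun y =>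
    calc #{g | g * t (k g) = y}
        ≤ #(univ.image fun j => y * (t j)⁻¹) := card_le_card fun g hg => by
          simp only [mem_filter, mem_univ, true_and] at hg
          simpa using ⟨k g, by rw [← hg, mul_inv_cancel_right]⟩
      _ ≤ Fintype.card K := card_image_le
  calc Fintype.card G = #(univ : Finset G) := card_univ.symm
    _ ≤ Fintype.card K * #(univ.image fun g => g * t (k g)) :=
        card_le_mul_card_image _ _ fun y _ => h_fibre y
    _ ≤ Fintype.card K * #{g | P g} := Nat.mul_le_mul_left _ (card_le_card h_image)

end Translates

section Shifts

variable {α β M : Type*} [AddGroup α] [Fintype α] [AddGroup β] [Fintype β] [AddCommMonoid M]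

theorem sum_sum_comp_add_right (σ : Equiv.Perm α) (h : α → α → M) :
    ∑ a, ∑ i, h i (σ (i + a)) = ∑ i, ∑ j, h i j := by
  rw [sum_comm]
  exact sum_congr rfl fun i _ => Equiv.sum_comp ((Equiv.addLeft i).trans σ) (h i)

/-- The objective `f` of the bilinear assignment problem. -/
def bapObjective (q : α → α → β → β → M) (c : α → α → M) (d : β → β → M)
    (σ : Equiv.Perm α) (π : Equiv.Perm β) : M :=
  (∑ i, ∑ k, q i (σ i) k (π k)) + (∑ i, c i (σ i)) + (∑ k, d k (π k))

theorem sum_bapObjective_mul_addRight (q : α → α → β → β → M) (c : α → α → M) (d : β → β → M)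
    (σ : Equiv.Perm α) (π : Equiv.Perm β) :
    ∑ p : α × β, bapObjective q c d (σ * Equiv.addRight p.1) (π * Equiv.addRight p.2) =
      (∑ i, ∑ j, ∑ k, ∑ l, q i j k l) + Fintype.card β • (∑ i, ∑ j, c i j) +
        Fintype.card α • (∑ k, ∑ l, d k l) := by
  have hq : ∑ a, ∑ b, ∑ i, ∑ k, q i (σ (i + a)) k (π (k + b)) = ∑ i, ∑ j, ∑ k, ∑ l, q i j k l := by
    rw [← sum_sum_comp_add_right σ]
    refine sum_congr rfl fun a _ => ?_
    rw [sum_comm]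
    exact sum_congr rfl fun i _ => sum_sum_comp_add_right π _
  have hd : ∑ a : α, ∑ b, ∑ k, d k (π (k + b)) = Fintype.card α • ∑ k, ∑ l, d k l := by
    rw [sum_sum_comp_add_right π, sum_const, card_univ]
  have hc : ∑ a, ∑ b : β, ∑ i, c i (σ (i + a)) = Fintype.card β • ∑ i, ∑ j, c i j := by
    simp only [sum_const, card_univ, ← smul_sum, sum_sum_comp_add_right σ]
  simp only [Fintype.sum_prod_type, bapObjective, Equiv.Perm.coe_mul, Function.comp_apply,
    Equiv.coe_addRight, sum_add_distrib, hq, hc, hd]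

end Shifts

theorem stmt_3 (m n : ℕ) (hm : 0 < m) (hn : 0 < n)
    (q : Fin m → Fin m → Fin n → Fin n → ℝ)
    (c : Fin m → Fin m → ℝ) (d : Fin n → Fin n → ℝ)
    (f : Equiv.Perm (Fin m) → Equiv.Perm (Fin n) → ℝ)
    (hf : ∀ σ π, f σ π =
      (∑ i, ∑ k, q i (σ i) k (π k)) + (∑ i, c i (σ i)) + (∑ k, d k (π k)))
    (A : ℝ)
    (hA : A = (∑ σ : Equiv.Perm (Fin m), ∑ π : Equiv.Perm (Fin n), f σ π)
        / ((Nat.factorial m * Nat.factorial n : ℕ) : ℝ)) :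
    Nat.factorial (m - 1) * Nat.factorial (n - 1) ≤
      (Finset.univ.filter
        (fun p : Equiv.Perm (Fin m) × Equiv.Perm (Fin n) => f p.1 p.2 ≤ A)).card := by
  have : NeZero m := ⟨hm.ne'⟩
  have : NeZero n := ⟨hn.ne'⟩
  have hf' : f = bapObjective q c d := funext₂ hf
  let t : Fin m × Fin n → Equiv.Perm (Fin m) × Equiv.Perm (Fin n) :=
    fun p => (Equiv.addRight p.1, Equiv.addRight p.2)
  have hA' : A = (∑ p : Equiv.Perm (Fin m) × Equiv.Perm (Fin n), f p.1 p.2) /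
      Fintype.card (Equiv.Perm (Fin m) × Equiv.Perm (Fin n)) := by
    simp [hA, Fintype.sum_prod_type, Fintype.card_perm]
  have h_good := exists_translate_le_average t (fun p => f p.1 p.2) _
    (fun p => by rw [hf']; exact sum_bapObjective_mul_addRight q c d p.1 p.2)
  have h_count := card_le_card_mul_card_filter_of_exists_translate t
    (fun p => f p.1 p.2 ≤ A) (hA' ▸ h_good)
  simp only [Fintype.card_prod, Fintype.card_perm, Fintype.card_fin] at h_count
  rw [← Nat.mul_factorial_pred hm.ne', ← Nat.mul_factorial_pred hn.ne',
    mul_mul_mul_comm] at h_count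
  exact Nat.le_of_mul_le_mul_left h_count (Nat.mul_pos hm hn)
end

section
/- For a ∈ ℤ/mℤ and b ∈ ℤ/nℤ, let σ_a be the permutation of ℤ/mℤ given by i ↦ i + a, and τ_b the permutation of ℤ/nℤ given by k ↦ k + b. Then Σ_{a ∈ ℤ/mℤ} Σ_{b ∈ ℤ/nℤ} f(σ_a, τ_b) = m·n·A, where A is the average of f over all m!·n! pairs of permutations. In particular, min_{a,b} f(σ_a,τ_b) ≤ A ≤ max_{a,b} f(σ_a,τ_b). -/
/-!
Spreading `c` and `d` evenly over the other index writes `f σ π` as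
`∑ i, ∑ k, F i (σ i) k (π k)`. For fixed `i`, every `j` equals `σ i` for exactly one shift
`σ = σ_{j - i}` and for exactly `(m - 1)!` permutations `σ`, so the sum of `f` over all pairs of
permutations is `(m - 1)! (n - 1)!` times its sum over pairs of shifts, both being multiples of
`∑ i j k l, F i j k l`. An average lies between the minimum and the maximum.
-/

open Finset Fintype Equiv
open scoped Nat

lemma sum_sum_sum_sum_comm {α β γ δ : Type*} [Fintype α] [Fintype β] [Fintype γ] [Fintype δ]
    (f : α → β → γ → δ → ℝ) :
    ∑ x, ∑ y, ∑ z, ∑ w, f x y z w = ∑ z, ∑ w, ∑ x, ∑ y, f x y z w := by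
  simp only [← Fintype.sum_prod_type']
  exact Fintype.sum_equiv ((prodAssoc _ _ _).symm.trans ((prodComm _ _).trans (prodAssoc _ _ _)))
    _ _ fun _ => rfl

lemma exists_le_and_exists_ge_of_sum_eq {ι : Type*} [Fintype ι] [Nonempty ι] (g : ι → ℝ) (A : ℝ)
    (h : ∑ x, g x = card ι * A) : (∃ x, g x ≤ A) ∧ ∃ x, A ≤ g x := by
  have hA : ∑ _x : ι, A = ∑ x, g x := by simp [h]
  obtain ⟨x, -, hx⟩ := exists_le_of_sum_le univ_nonempty hA.ge
  obtain ⟨y, -, hy⟩ := exists_le_of_sum_le univ_nonempty hA.le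
  exact ⟨⟨x, hx⟩, y, hy⟩

section
variable {α β : Type*} [Fintype α] [Fintype β]

lemma sum_addRight_apply [AddGroup α] (g : α → ℝ) (i : α) :
    ∑ a : α, g (Equiv.addRight a i) = ∑ j, g j :=
  Fintype.sum_equiv (Equiv.addLeft i) _ _ fun a => by simp

lemma sum_addRight_sum_sum [AddGroup α] [AddGroup β] (F : α → α → β → β → ℝ) :
    ∑ a : α, ∑ b : β, ∑ i, ∑ k, F i (Equiv.addRight a i) k (Equiv.addRight b k)
      = ∑ i, ∑ k, ∑ j, ∑ l, F i j k l := by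
  rw [sum_sum_sum_sum_comm]
  refine sum_congr rfl fun i _ => sum_congr rfl fun k _ => ?_
  simp only [sum_addRight_apply (fun j => ∑ l, F i j k l), sum_addRight_apply (F i _ k)]

variable [DecidableEq α] [DecidableEq β]

lemma sum_perm_apply_eq (g : α → ℝ) (i i' : α) :
    ∑ σ : Perm α, g (σ i) = ∑ σ : Perm α, g (σ i') :=
  Fintype.sum_equiv (Equiv.mulRight (swap i i')) _ _ fun σ => by simp [Perm.mul_apply]

lemma card_mul_sum_perm_apply (g : α → ℝ) (i : α) :
    card α * ∑ σ : Perm α, g (σ i) = (card α)! * ∑ j, g j := by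
  calc card α * ∑ σ : Perm α, g (σ i)
      = ∑ i' : α, ∑ σ : Perm α, g (σ i') := by
        simp [sum_perm_apply_eq g _ i]
    _ = ∑ σ : Perm α, ∑ j, g j := by
        rw [Finset.sum_comm]
        exact sum_congr rfl fun σ _ => Equiv.sum_comp σ g
    _ = (card α)! * ∑ j, g j := by simp [Fintype.card_perm]

lemma card_mul_card_mul_sum_perm_apply₂ (g : α → β → ℝ) (i : α) (k : β) :
    card α * card β * ∑ σ : Perm α, ∑ π : Perm β, g (σ i) (π k)
      = (card α)! * (card β)! * ∑ j, ∑ l, g j l := by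
  calc card α * card β * ∑ σ : Perm α, ∑ π : Perm β, g (σ i) (π k)
      = card α * ∑ σ : Perm α, (card β)! * ∑ l, g (σ i) l := by
        rw [mul_assoc, Finset.mul_sum]
        exact congrArg _ (sum_congr rfl fun σ _ => card_mul_sum_perm_apply _ k)
    _ = (card β)! * ∑ l, card α * ∑ σ : Perm α, g (σ i) l := by
        simp_rw [← Finset.mul_sum, Finset.sum_comm (γ := β)]
        ring
    _ = (card α)! * (card β)! * ∑ j, ∑ l, g j l := by
        rw [sum_congr rfl fun l _ => card_mul_sum_perm_apply (g · l) i, ← Finset.mul_sum,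
          Finset.sum_comm]
        ring

lemma card_mul_card_mul_sum_perm_sum_sum (F : α → α → β → β → ℝ) :
    card α * card β * ∑ σ : Perm α, ∑ π : Perm β, ∑ i, ∑ k, F i (σ i) k (π k)
      = (card α)! * (card β)! * ∑ i, ∑ k, ∑ j, ∑ l, F i j k l := by
  rw [sum_sum_sum_sum_comm, Finset.mul_sum, Finset.mul_sum]
  refine sum_congr rfl fun i _ => ?_
  rw [Finset.mul_sum, Finset.mul_sum]
  exact sum_congr rfl fun k _ => card_mul_card_mul_sum_perm_apply₂ (F i · k ·) i k

end

theorem stmt_4 (m n : ℕ) [NeZero m] [NeZero n]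
    (q : ZMod m → ZMod m → ZMod n → ZMod n → ℝ)
    (c : ZMod m → ZMod m → ℝ) (d : ZMod n → ZMod n → ℝ)
    (f : Equiv.Perm (ZMod m) → Equiv.Perm (ZMod n) → ℝ)
    (hf : ∀ σ π, f σ π =
      (∑ i, ∑ k, q i (σ i) k (π k)) + (∑ i, c i (σ i)) + (∑ k, d k (π k)))
    (A : ℝ)
    (hA : A = (∑ σ : Equiv.Perm (ZMod m), ∑ π : Equiv.Perm (ZMod n), f σ π)
        / ((Nat.factorial m * Nat.factorial n : ℕ) : ℝ)) :
    (∑ a : ZMod m, ∑ b : ZMod n, f (Equiv.addRight a) (Equiv.addRight b))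
        = (m : ℝ) * (n : ℝ) * A
    ∧ (∃ a : ZMod m, ∃ b : ZMod n, f (Equiv.addRight a) (Equiv.addRight b) ≤ A)
    ∧ (∃ a : ZMod m, ∃ b : ZMod n, A ≤ f (Equiv.addRight a) (Equiv.addRight b)) := by
  have hm : (m : ℝ) ≠ 0 := NeZero.ne _
  have hn : (n : ℝ) ≠ 0 := NeZero.ne _
  set F : ZMod m → ZMod m → ZMod n → ZMod n → ℝ :=
    fun i j k l => q i j k l + c i j / n + d k l / m
  have hfF : ∀ σ π, f σ π = ∑ i, ∑ k, F i (σ i) k (π k) := by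
    intro σ π
    simp [F, hf, sum_add_distrib, ← sum_div, mul_div_cancel₀, hm, hn]
  have hsum : ∑ a : ZMod m, ∑ b : ZMod n, f (Equiv.addRight a) (Equiv.addRight b)
      = m * n * A := by
    have hperm := card_mul_card_mul_sum_perm_sum_sum F
    simp only [ZMod.card, ← hfF] at hperm
    rw [hA, sum_congr rfl fun a _ => sum_congr rfl fun b _ => hfF _ _, sum_addRight_sum_sum]
    push_cast
    field_simp
    rw [hperm]
    ring
  obtain ⟨⟨⟨a, b⟩, hle⟩, ⟨a', b'⟩, hge⟩ := exists_le_and_exists_ge_of_sum_eq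
    (fun p : ZMod m × ZMod n => f (Equiv.addRight p.1) (Equiv.addRight p.2)) A
    (by rw [Fintype.sum_prod_type, Fintype.card_prod, ZMod.card, ZMod.card, Nat.cast_mul]
        exact hsum)
  exact ⟨hsum, ⟨a, b, hle⟩, a', b', hge⟩
end

section
/- If the cost array satisfies q(i,j,k,ℓ) = e(i,j,k) + f(i,j,ℓ) + g(i,k,ℓ) + h(j,k,ℓ) for all i,j ∈ {1,...,m}, k,ℓ ∈ {1,...,n}, then q is linearizable: there exist matrices a : {1,...,m}² → ℝ and b : {1,...,n}² → ℝ such that for every permutation σ of {1,...,m} and every permutation π of {1,...,n}, Σ_{i,k} q(i,σ(i),k,π(k)) = Σ_i a(i,σ(i)) + Σ_k b(k,π(k)). Explicitly, one may take a(i,j) = Σ_k e(i,j,k) + Σ_ℓ f(i,j,ℓ) and b(k,ℓ) = Σ_i g(i,k,ℓ) + Σ_j h(j,k,ℓ). -/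
theorem stmt_5 (m n : ℕ)
    (q : Fin m → Fin m → Fin n → Fin n → ℝ)
    (e f : Fin m → Fin m → Fin n → ℝ)
    (g h : Fin m → Fin n → Fin n → ℝ)
    (hq : ∀ i j k l, q i j k l = e i j k + f i j l + g i k l + h j k l) :
    ∀ (σ : Equiv.Perm (Fin m)) (π : Equiv.Perm (Fin n)),
      (∑ i, ∑ k, q i (σ i) k (π k))
        = (∑ i, ((∑ k, e i (σ i) k) + (∑ l, f i (σ i) l)))
          + (∑ k, ((∑ i, g i k (π k)) + (∑ j, h j k (π k)))) := by
  intro σ π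
  simp only [hq, Finset.sum_add_distrib]
  have h1 : ∀ i, ∑ k, f i (σ i) (π k) = ∑ l, f i (σ i) l := fun i =>
    Equiv.sum_comp π (fun l => f i (σ i) l)
  have h2 : ∀ k, ∑ i, h (σ i) k (π k) = ∑ j, h j k (π k) := fun k =>
    Equiv.sum_comp σ (fun j => h j k (π k))
  rw [Finset.sum_comm (f := fun i k => g i k (π k)),
      Finset.sum_comm (f := fun i k => h (σ i) k (π k))]
  simp only [h1]
  rw [show (∑ k, ∑ i, h (σ i) k (π k)) = ∑ k, ∑ j, h j k (π k) from
    Finset.sum_congr rfl fun k _ => h2 k]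
  ring
end

section
/- Suppose Σ_{i=1}^m Σ_{k=1}^n q(i,σ(i),k,π(k)) = K for every permutation σ of {1,...,m} and every permutation π of {1,...,n}, where K is a constant. Then for all i,j,k,ℓ with indices at least 2 (taking index 1 as a reference), q(i,j,k,ℓ) = q(i,j,k,1) + q(i,j,1,ℓ) + q(i,1,k,ℓ) + q(1,j,k,ℓ) − q(i,j,1,1) − q(i,1,k,1) − q(i,1,1,ℓ) − q(1,j,k,1) − q(1,j,1,ℓ) − q(1,1,k,ℓ) + q(i,1,1,1) + q(1,j,1,1) + q(1,1,k,1) + q(1,1,1,ℓ) − q(1,1,1,1), and this identity in fact holds for all i,j ∈ {1,...,m} and k,ℓ ∈ {1,...,n}. -/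
/-!
A permutation-invariant linear assignment cost `∑ k, f k (π k)` forces every exchange
`f c u + f d v - f c v - f d u` with `c ≠ d`, `u ≠ v` to vanish: composing a permutation with
`c ↦ u, d ↦ v` with the transposition `swap c d` changes the sum by exactly that exchange.
Fixing `π` and applying this to the row sums `(i, x) ↦ ∑ k, q i x k (π k)` shows that the
exchange of `q` in its first two arguments again has permutation-invariant (zero) sum, so its
exchange in the last two arguments vanishes too. Taking `0` as the second point of each exchange
gives the inclusion–exclusion formula.
-/

open Finset Equiv

lemma exists_perm_apply_eq_and_apply_eq {α : Type*} [DecidableEq α] {c d u v : α}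
    (hcd : c ≠ d) (huv : u ≠ v) :
    ∃ π : Perm α, π c = u ∧ π d = v := by
  have hdu : swap c u d ≠ u := fun h ↦
    hcd ((swap c u).injective (h.trans (swap_apply_left c u).symm)).symm
  refine ⟨swap (swap c u d) v * swap c u, ?_, ?_⟩
  · rw [Perm.mul_apply, swap_apply_left]
    exact swap_apply_of_ne_of_ne hdu.symm huv
  · rw [Perm.mul_apply, swap_apply_left]

section Exchange

variable {α β M : Type*} [Fintype α] [DecidableEq α] [Fintype β] [AddCommGroup M]

lemma sum_perm_mul_swap_sub (f : α → α → M) (π : Perm α) {c d : α} (hcd : c ≠ d) :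
    ∑ k, f k ((π * swap c d) k) - ∑ k, f k (π k) =
      f c (π d) + f d (π c) - f c (π c) - f d (π d) := by
  rw [← sum_sub_distrib, ← sum_subset (subset_univ {c, d}), sum_pair hcd]
  · simp only [Perm.mul_apply, swap_apply_left, swap_apply_right]
    abel
  · intro x _ hx
    simp only [mem_insert, mem_singleton, not_or] at hx
    rw [Perm.mul_apply, swap_apply_of_ne_of_ne hx.1 hx.2, sub_self]

lemma add_eq_add_of_sum_perm_eq (f : α → α → M) (C : M)
    (hf : ∀ π : Perm α, ∑ k, f k (π k) = C) {c d u v : α} (hcd : c ≠ d) (huv : u ≠ v) :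
    f c u + f d v = f c v + f d u := by
  obtain ⟨π, hπc, hπd⟩ := exists_perm_apply_eq_and_apply_eq hcd huv
  have h := sum_perm_mul_swap_sub f π hcd
  rw [hf, hf, sub_self, hπc, hπd, eq_comm, sub_sub, sub_eq_zero] at h
  exact h.symm

def exchangeCost (q : α → α → β → β → M) (a b x y : α) (k l : β) : M :=
  q a x k l + q b y k l - q a y k l - q b x k l

lemma sum_exchangeCost_eq_zero (q : α → α → β → β → M) (C : M)
    (hq : ∀ (σ : Perm α) (π : Perm β), ∑ i, ∑ k, q i (σ i) k (π k) = C)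
    {a b x y : α} (hab : a ≠ b) (hxy : x ≠ y) (π : Perm β) :
    ∑ k, exchangeCost q a b x y k (π k) = 0 := by
  have h := add_eq_add_of_sum_perm_eq (fun i x ↦ ∑ k, q i x k (π k)) C (hq · π) hab hxy
  simp only [exchangeCost, sum_sub_distrib, sum_add_distrib]
  rw [h]
  abel

lemma exchangeCost_add_eq_add [DecidableEq β] (q : α → α → β → β → M) (C : M)
    (hq : ∀ (σ : Perm α) (π : Perm β), ∑ i, ∑ k, q i (σ i) k (π k) = C)
    {a b x y : α} (hab : a ≠ b) (hxy : x ≠ y)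
    {c d u v : β} (hcd : c ≠ d) (huv : u ≠ v) :
    exchangeCost q a b x y c u + exchangeCost q a b x y d v =
      exchangeCost q a b x y c v + exchangeCost q a b x y d u :=
  add_eq_add_of_sum_perm_eq _ 0 (sum_exchangeCost_eq_zero q C hq hab hxy) hcd huv

end Exchange

theorem stmt_6 (m n : ℕ)
    (q : Fin (m + 2) → Fin (m + 2) → Fin (n + 2) → Fin (n + 2) → ℝ)
    (K : ℝ)
    (hK : ∀ (σ : Equiv.Perm (Fin (m + 2))) (π : Equiv.Perm (Fin (n + 2))),
      (∑ i, ∑ k, q i (σ i) k (π k)) = K) :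
    ∀ (i j : Fin (m + 2)) (k l : Fin (n + 2)),
      q i j k l =
        q i j k 0 + q i j 0 l + q i 0 k l + q 0 j k l
        - q i j 0 0 - q i 0 k 0 - q i 0 0 l - q 0 j k 0 - q 0 j 0 l - q 0 0 k l
        + q i 0 0 0 + q 0 j 0 0 + q 0 0 k 0 + q 0 0 0 l
        - q 0 0 0 0 := by
  intro i j k l
  rcases eq_or_ne i 0 with rfl | hi
  · ring
  rcases eq_or_ne j 0 with rfl | hj
  · ring
  rcases eq_or_ne k 0 with rfl | hk
  · ring
  rcases eq_or_ne l 0 with rfl | hl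
  · ring
  have h := exchangeCost_add_eq_add q K hK hi hj hk hl
  simp only [exchangeCost] at h
  linear_combination h
end

section
/- If Σ_{i,k} q(i,σ(i),k,π(k)) = K for every permutation σ of {1,...,m} and permutation π of {1,...,n} (m,n ≥ 2), then q is sum-decomposable: there exist arrays e, f : {1,...,m}² × {1,...,n} → ℝ and g, h : {1,...,m} × {1,...,n}² → ℝ with q(i,j,k,ℓ) = e(i,j,k) + f(i,j,ℓ) + g(i,k,ℓ) + h(j,k,ℓ) for all i,j,k,ℓ. -/
theorem key_lemma_stmt7 (m n : ℕ)
    (q : Fin (m + 2) → Fin (m + 2) → Fin (n + 2) → Fin (n + 2) → ℝ)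
    (K : ℝ)
    (hK : ∀ (σ : Equiv.Perm (Fin (m + 2))) (π : Equiv.Perm (Fin (n + 2))),
      (∑ i, ∑ k, q i (σ i) k (π k)) = K)
    (a b : Fin (m + 2)) (c d : Fin (n + 2)) :
    q a b c d - q a b c 0 - q a b 0 d + q a b 0 0
    - q a 0 c d + q a 0 c 0 + q a 0 0 d - q a 0 0 0
    - q 0 b c d + q 0 b c 0 + q 0 b 0 d - q 0 b 0 0
    + q 0 0 c d - q 0 0 c 0 - q 0 0 0 d + q 0 0 0 0 = 0 := by
  rcases eq_or_ne a 0 with rfl | ha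
  · ring
  rcases eq_or_ne b 0 with rfl | hb
  · ring
  rcases eq_or_ne c 0 with rfl | hc
  · ring
  rcases eq_or_ne d 0 with rfl | hd
  · ring
  set σ : Equiv.Perm (Fin (m+2)) := Equiv.swap a b with hσdef
  set σ' : Equiv.Perm (Fin (m+2)) := Equiv.swap a b * Equiv.swap a 0 with hσ'def
  set π : Equiv.Perm (Fin (n+2)) := Equiv.swap c d with hπdef
  set π' : Equiv.Perm (Fin (n+2)) := Equiv.swap c d * Equiv.swap c 0 with hπ'def
  have hσa : σ a = b := Equiv.swap_apply_left a b
  have hσ0 : σ (0 : Fin (m+2)) = 0 := Equiv.swap_apply_of_ne_of_ne (Ne.symm ha) (Ne.symm hb)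
  have hσ'a : σ' a = 0 := by
    simp only [hσ'def, Equiv.Perm.mul_apply, Equiv.swap_apply_left]
    exact hσ0
  have hσ'0 : σ' (0 : Fin (m+2)) = b := by
    simp only [hσ'def, Equiv.Perm.mul_apply, Equiv.swap_apply_right]
    exact hσa
  have hσ' : ∀ x, x ≠ a → x ≠ 0 → σ' x = σ x := by
    intro x hxa hx0
    simp only [hσ'def, hσdef, Equiv.Perm.mul_apply, Equiv.swap_apply_of_ne_of_ne hxa hx0]
  have hπc : π c = d := Equiv.swap_apply_left c d
  have hπ0 : π (0 : Fin (n+2)) = 0 := Equiv.swap_apply_of_ne_of_ne (Ne.symm hc) (Ne.symm hd)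
  have hπ'c : π' c = 0 := by
    simp only [hπ'def, Equiv.Perm.mul_apply, Equiv.swap_apply_left]
    exact hπ0
  have hπ'0 : π' (0 : Fin (n+2)) = d := by
    simp only [hπ'def, Equiv.Perm.mul_apply, Equiv.swap_apply_right]
    exact hπc
  have hπ' : ∀ y, y ≠ c → y ≠ 0 → π' y = π y := by
    intro y hyc hy0
    simp only [hπ'def, hπdef, Equiv.Perm.mul_apply, Equiv.swap_apply_of_ne_of_ne hyc hy0]
  have hsum : (∑ x, ∑ y,
      (q x (σ x) y (π y) + q x (σ' x) y (π' y)
        - q x (σ' x) y (π y) - q x (σ x) y (π' y))) = 0 := by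
    have h1 := hK σ π
    have h2 := hK σ' π'
    have h3 := hK σ' π
    have h4 := hK σ π'
    simp only [Finset.sum_add_distrib, Finset.sum_sub_distrib]
    linarith
  have hinner : ∀ x : Fin (m+2),
      (∑ y, (q x (σ x) y (π y) + q x (σ' x) y (π' y)
        - q x (σ' x) y (π y) - q x (σ x) y (π' y)))
      = ∑ y ∈ ({0, c} : Finset (Fin (n+2))),
        (q x (σ x) y (π y) + q x (σ' x) y (π' y)
          - q x (σ' x) y (π y) - q x (σ x) y (π' y)) := by
    intro x
    refine (Finset.sum_subset (Finset.subset_univ _) ?_).symm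
    intro y _ hy
    simp only [Finset.mem_insert, Finset.mem_singleton, not_or] at hy
    rw [hπ' y hy.2 hy.1]
    ring
  have houter : (∑ x, ∑ y,
      (q x (σ x) y (π y) + q x (σ' x) y (π' y)
        - q x (σ' x) y (π y) - q x (σ x) y (π' y)))
      = ∑ x ∈ ({0, a} : Finset (Fin (m+2))), ∑ y,
        (q x (σ x) y (π y) + q x (σ' x) y (π' y)
          - q x (σ' x) y (π y) - q x (σ x) y (π' y)) := by
    refine (Finset.sum_subset (Finset.subset_univ _) ?_).symm
    intro x _ hx
    simp only [Finset.mem_insert, Finset.mem_singleton, not_or] at hx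
    apply Finset.sum_eq_zero
    intro y _
    rw [hσ' x hx.2 hx.1]
    ring
  rw [houter] at hsum
  rw [Finset.sum_pair (Ne.symm ha)] at hsum
  rw [hinner 0, hinner a] at hsum
  rw [Finset.sum_pair (Ne.symm hc), Finset.sum_pair (Ne.symm hc)] at hsum
  rw [hσa, hσ0, hσ'a, hσ'0, hπc, hπ0, hπ'c, hπ'0] at hsum
  linarith

theorem stmt_7 (m n : ℕ)
    (q : Fin (m + 2) → Fin (m + 2) → Fin (n + 2) → Fin (n + 2) → ℝ)
    (K : ℝ)
    (hK : ∀ (σ : Equiv.Perm (Fin (m + 2))) (π : Equiv.Perm (Fin (n + 2))),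
      (∑ i, ∑ k, q i (σ i) k (π k)) = K) :
    ∃ (e f : Fin (m + 2) → Fin (m + 2) → Fin (n + 2) → ℝ)
      (g h : Fin (m + 2) → Fin (n + 2) → Fin (n + 2) → ℝ),
      ∀ i j k l, q i j k l = e i j k + f i j l + g i k l + h j k l := by
  refine ⟨fun i j k => q i j k 0 - q i j 0 0,
         fun i j l => q i j 0 l,
         fun i k l => q i 0 k l - q i 0 k 0 - q i 0 0 l + q i 0 0 0
                      - q 0 0 k l + q 0 0 k 0 + q 0 0 0 l - q 0 0 0 0,
         fun j k l => q 0 j k l - q 0 j k 0 - q 0 j 0 l + q 0 j 0 0,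
         fun i j k l => ?_⟩
  have := key_lemma_stmt7 m n q K hK i j k l
  dsimp only
  linarith
end

section
/- A cost array q : {1,...,m}² × {1,...,n}² → ℝ is linearizable (i.e., there exist a : {1,...,m}² → ℝ and b : {1,...,n}² → ℝ with Σ_{i,k} q(i,σ(i),k,π(k)) = Σ_i a(i,σ(i)) + Σ_k b(k,π(k)) for all permutations σ of {1,...,m} and π of {1,...,n}) if and only if there exist arrays e, f : {1,...,m}² × {1,...,n} → ℝ and g, h : {1,...,m} × {1,...,n}² → ℝ such that q(i,j,k,ℓ) = e(i,j,k) + f(i,j,ℓ) + g(i,k,ℓ) + h(j,k,ℓ) for all i,j,k,ℓ. -/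
/-!
Transposing `i₁` and `i₂` in `σ` changes `∑ i, c i (σ i)` by the cross difference
`c i₁ j₂ + c i₂ j₁ - c i₁ j₁ - c i₂ j₂` of `c` at `j₁ = σ i₁`, `j₂ = σ i₂`. If `q` is
linearizable, the total cost is `A σ + B π`, so the change caused by a transposition in `σ` does
not depend on `π`. Comparing two values of `π` that differ by a transposition, and using that
permutations act 2-transitively, shows that the fourth-order mixed difference of `q` vanishes.
That is exactly the condition for `q` to be a sum of four functions, each of which omits one index.
Conversely, a summand that omits an index is linearizable: summing over the remaining free index
absorbs the permutation.
-/

open Finset Equiv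

def swapDiff {α γ M : Type*} [AddCommGroup M] (c : α → γ → M) (i₁ i₂ : α) (j₁ j₂ : γ) : M :=
  c i₁ j₂ + c i₂ j₁ - c i₁ j₁ - c i₂ j₂

section Linearizable

variable {α β M : Type*} [Fintype α] [Fintype β]

def IsLinearizable [AddCommMonoid M] (q : α → α → β → β → M) : Prop :=
  ∃ (a : α → α → M) (b : β → β → M), ∀ (σ : Perm α) (π : Perm β),
    ∑ i, ∑ k, q i (σ i) k (π k) = ∑ i, a i (σ i) + ∑ k, b k (π k)

theorem sum_mul_swap_sub_sum [AddCommGroup M] [DecidableEq α] (c : α → α → M) (σ : Perm α)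
    (i₁ i₂ : α) :
    ∑ i, c i ((σ * swap i₁ i₂) i) - ∑ i, c i (σ i) = swapDiff c i₁ i₂ (σ i₁) (σ i₂) := by
  rcases eq_or_ne i₁ i₂ with rfl | hi
  · simp [swapDiff]
  have reindex : ∑ i, c i (σ (swap i₁ i₂ i)) = ∑ i, c (swap i₁ i₂ i) (σ i) :=
    Fintype.sum_equiv (swap i₁ i₂) _ _ fun i => by simp
  simp only [Perm.mul_apply]
  rw [reindex, ← sum_sub_distrib, ← sum_subset (subset_univ {i₁, i₂}), sum_pair hi]
  · simp only [swap_apply_left, swap_apply_right, swapDiff]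
    abel
  · intro i _ hi
    simp only [mem_insert, mem_singleton, not_or] at hi
    rw [swap_apply_of_ne_of_ne hi.1 hi.2, sub_self]

theorem sum_sum_mul_swap_sub_sum_sum [AddCommGroup M] [DecidableEq α] (q : α → α → β → β → M)
    (σ : Perm α) (π : Perm β) (i₁ i₂ : α) :
    ∑ i, ∑ k, q i ((σ * swap i₁ i₂) i) k (π k) - ∑ i, ∑ k, q i (σ i) k (π k) =
      ∑ k, swapDiff (fun i j => q i j k (π k)) i₁ i₂ (σ i₁) (σ i₂) := by
  have hcomm (τ : Perm α) : ∑ i, ∑ k, q i (τ i) k (π k) = ∑ k, ∑ i, q i (τ i) k (π k) :=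
    sum_comm
  rw [hcomm, hcomm, ← sum_sub_distrib]
  exact sum_congr rfl fun k _ => sum_mul_swap_sub_sum (fun i j => q i j k (π k)) σ i₁ i₂

theorem IsLinearizable.swapDiff_swapDiff_eq_zero [AddCommGroup M] [DecidableEq α]
    [DecidableEq β] {q : α → α → β → β → M} (hq : IsLinearizable q) (i₁ i₂ j₁ j₂ : α)
    (k₁ k₂ l₁ l₂ : β) :
    swapDiff (fun k l => swapDiff (fun i j => q i j k l) i₁ i₂ j₁ j₂) k₁ k₂ l₁ l₂ = 0 := by
  rcases eq_or_ne i₁ i₂ with rfl | hi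
  · simp [swapDiff]
  rcases eq_or_ne j₁ j₂ with rfl | hj
  · simp [swapDiff]
  rcases eq_or_ne k₁ k₂ with rfl | hk
  · simp [swapDiff]
  rcases eq_or_ne l₁ l₂ with rfl | hl
  · simp [swapDiff]
  obtain ⟨a, b, hab⟩ := hq
  obtain ⟨σ, hσ₁, hσ₂⟩ :=
    MulAction.is_two_pretransitive_iff.mp (Perm.isMultiplyPretransitive α 2) hi hj
  obtain ⟨π, hπ₁, hπ₂⟩ :=
    MulAction.is_two_pretransitive_iff.mp (Perm.isMultiplyPretransitive β 2) hk hl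
  simp only [Perm.smul_def] at hσ₁ hσ₂ hπ₁ hπ₂
  have h := sum_mul_swap_sub_sum (fun k l => swapDiff (fun i j => q i j k l) i₁ i₂ j₁ j₂) π k₁ k₂
  rw [hπ₁, hπ₂] at h
  rw [← h, ← hσ₁, ← hσ₂, ← sum_sum_mul_swap_sub_sum_sum, ← sum_sum_mul_swap_sub_sum_sum,
    hab, hab, hab, hab]
  abel

theorem IsLinearizable.add [AddCommMonoid M] {q₁ q₂ : α → α → β → β → M}
    (h₁ : IsLinearizable q₁) (h₂ : IsLinearizable q₂) :
    IsLinearizable fun i j k l => q₁ i j k l + q₂ i j k l := by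
  obtain ⟨a₁, b₁, h₁⟩ := h₁
  obtain ⟨a₂, b₂, h₂⟩ := h₂
  refine ⟨a₁ + a₂, b₁ + b₂, fun σ π => ?_⟩
  simp only [Pi.add_apply, sum_add_distrib, h₁, h₂]
  abel

theorem isLinearizable_ijk [AddCommMonoid M] (e : α → α → β → M) :
    IsLinearizable fun i j k (_ : β) => e i j k :=
  ⟨fun i j => ∑ k, e i j k, 0, fun _ _ => by simp⟩

theorem isLinearizable_ijl [AddCommMonoid M] (f : α → α → β → M) :
    IsLinearizable fun i j (_ : β) l => f i j l :=
  ⟨fun i j => ∑ l, f i j l, 0, fun σ π => by simp [Equiv.sum_comp π]⟩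

theorem isLinearizable_ikl [AddCommMonoid M] (g : α → β → β → M) :
    IsLinearizable fun i (_ : α) k l => g i k l :=
  ⟨0, fun k l => ∑ i, g i k l, fun _ _ => by simp [sum_comm (γ := α)]⟩

theorem isLinearizable_jkl [AddCommMonoid M] (h : α → β → β → M) :
    IsLinearizable fun (_ : α) j k l => h j k l :=
  ⟨0, fun k l => ∑ j, h j k l, fun σ _ => by
    simp [sum_comm (γ := α), fun k l => Equiv.sum_comp σ (h · k l)]⟩

end Linearizable

theorem exists_decomposition_of_swapDiff_swapDiff_eq_zero {α γ β δ M : Type*} [AddCommGroup M]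
    {q : α → γ → β → δ → M} (i₀ : α) (j₀ : γ) (k₀ : β) (l₀ : δ)
    (hq : ∀ i j k l,
      swapDiff (fun k l => swapDiff (fun i j => q i j k l) i i₀ j j₀) k k₀ l l₀ = 0) :
    ∃ (e : α → γ → β → M) (f : α → γ → δ → M) (g : α → β → δ → M) (h : γ → β → δ → M),
      ∀ i j k l, q i j k l = e i j k + f i j l + g i k l + h j k l := by
  -- Inclusion–exclusion over which indices are moved to the base point; the only term that
  -- involves all four indices is the mixed difference.
  refine ⟨fun i j k => q i j k l₀, fun i j l => q i j k₀ l - q i j k₀ l₀,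
    fun i k l => q i j₀ k l - q i j₀ k l₀ - q i j₀ k₀ l + q i j₀ k₀ l₀
      - q i₀ j₀ k l + q i₀ j₀ k l₀ + q i₀ j₀ k₀ l - q i₀ j₀ k₀ l₀,
    fun j k l => q i₀ j k l - q i₀ j k l₀ - q i₀ j k₀ l + q i₀ j k₀ l₀, fun i j k l => ?_⟩
  rw [← sub_eq_zero, ← hq i j k l]
  simp only [swapDiff]
  abel

theorem stmt_8 (m n : ℕ)
    (q : Fin (m + 2) → Fin (m + 2) → Fin (n + 2) → Fin (n + 2) → ℝ) :
    (∃ (a : Fin (m + 2) → Fin (m + 2) → ℝ) (b : Fin (n + 2) → Fin (n + 2) → ℝ),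
      ∀ (σ : Equiv.Perm (Fin (m + 2))) (π : Equiv.Perm (Fin (n + 2))),
        (∑ i, ∑ k, q i (σ i) k (π k)) = (∑ i, a i (σ i)) + (∑ k, b k (π k)))
    ↔ (∃ (e f : Fin (m + 2) → Fin (m + 2) → Fin (n + 2) → ℝ)
        (g h : Fin (m + 2) → Fin (n + 2) → Fin (n + 2) → ℝ),
        ∀ i j k l, q i j k l = e i j k + f i j l + g i k l + h j k l) := by
  refine ⟨fun hq => exists_decomposition_of_swapDiff_swapDiff_eq_zero 0 0 0 0
    fun i j k l => IsLinearizable.swapDiff_swapDiff_eq_zero hq i 0 j 0 k 0 l 0, ?_⟩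
  rintro ⟨e, f, g, h, hq⟩
  have hsum : q = fun i j k l => e i j k + f i j l + g i k l + h j k l :=
    funext fun i => funext fun j => funext fun k => funext fun l => hq i j k l
  rw [hsum]
  exact (((isLinearizable_ijk e).add (isLinearizable_ijl f)).add (isLinearizable_ikl g)).add
    (isLinearizable_jkl h)
end

section
/- Suppose for every i,j ∈ {1,...,m} there is a constant α(i,j) such that Σ_{k=1}^n q(i,j,k,π(k)) = α(i,j) for every permutation π of {1,...,n} (constant value property of every row of q). Define w(i,j) = α(i,j) + c(i,j). If σ* minimizes Σ_i w(i,σ(i)) over permutations σ of {1,...,m}, and π* minimizes Σ_k d(k,π(k)) over permutations π of {1,...,n}, then (σ*,π*) minimizes f(σ,π) = Σ_{i,k} q(i,σ(i),k,π(k)) + Σ_i c(i,σ(i)) + Σ_k d(k,π(k)) over all pairs (σ,π). -/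
theorem stmt_9 (m n : ℕ)
    (q : Fin m → Fin m → Fin n → Fin n → ℝ)
    (c : Fin m → Fin m → ℝ) (d : Fin n → Fin n → ℝ)
    (α : Fin m → Fin m → ℝ)
    (hCVP : ∀ (i j : Fin m) (π : Equiv.Perm (Fin n)), (∑ k, q i j k (π k)) = α i j)
    (σs : Equiv.Perm (Fin m)) (πs : Equiv.Perm (Fin n))
    (hσ : ∀ σ : Equiv.Perm (Fin m),
      (∑ i, (α i (σs i) + c i (σs i))) ≤ (∑ i, (α i (σ i) + c i (σ i))))
    (hπ : ∀ π : Equiv.Perm (Fin n), (∑ k, d k (πs k)) ≤ (∑ k, d k (π k))) :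
    ∀ (σ : Equiv.Perm (Fin m)) (π : Equiv.Perm (Fin n)),
      (∑ i, ∑ k, q i (σs i) k (πs k)) + (∑ i, c i (σs i)) + (∑ k, d k (πs k))
        ≤ (∑ i, ∑ k, q i (σ i) k (π k)) + (∑ i, c i (σ i)) + (∑ k, d k (π k)) := by
  intro σ π
  have h1 : ∀ (s : Equiv.Perm (Fin m)) (p : Equiv.Perm (Fin n)),
      (∑ i, ∑ k, q i (s i) k (p k)) + (∑ i, c i (s i))
        = ∑ i, (α i (s i) + c i (s i)) := by
    intro s p
    rw [Finset.sum_add_distrib]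
    congr 1
    exact Finset.sum_congr rfl fun i _ => hCVP i (s i) p
  have := hσ σ
  have := hπ π
  rw [add_assoc, add_assoc, ← add_assoc (∑ i, ∑ k, q i (σs i) k (πs k)),
    ← add_assoc (∑ i, ∑ k, q i (σ i) k (π k)), h1 σs πs, h1 σ π]
  linarith
end

section
/- Let q(i,j,k,ℓ) = a(i,j)·b(k,ℓ) (rank-one cost array) and let d be a sum matrix, i.e., d(k,ℓ) = s(k) + t(ℓ). Let π_min and π_max be permutations of {1,...,n} minimizing and maximizing Σ_k b(k,π(k)), respectively. Then the minimum over all pairs (σ,π) of f(σ,π) = (Σ_i a(i,σ(i)))·(Σ_k b(k,π(k))) + Σ_i c(i,σ(i)) + Σ_k d(k,π(k)) is attained at a pair (σ,π) with π ∈ {π_min, π_max}. That is, min over all (σ,π) equals min over pairs (σ,π) where π ranges only over {π_min, π_max}. -/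
theorem stmt_11 (m n : ℕ)
    (a c : Fin m → Fin m → ℝ) (b : Fin n → Fin n → ℝ)
    (s t : Fin n → ℝ) (d : Fin n → Fin n → ℝ)
    (hd : ∀ k l, d k l = s k + t l)
    (f : Equiv.Perm (Fin m) → Equiv.Perm (Fin n) → ℝ)
    (hf : ∀ σ π, f σ π =
      (∑ i, a i (σ i)) * (∑ k, b k (π k)) + (∑ i, c i (σ i)) + (∑ k, d k (π k)))
    (πmin πmax : Equiv.Perm (Fin n))
    (hmin : ∀ π : Equiv.Perm (Fin n), (∑ k, b k (πmin k)) ≤ (∑ k, b k (π k)))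
    (hmax : ∀ π : Equiv.Perm (Fin n), (∑ k, b k (π k)) ≤ (∑ k, b k (πmax k))) :
    ∃ (σ : Equiv.Perm (Fin m)) (π : Equiv.Perm (Fin n)),
      (π = πmin ∨ π = πmax) ∧
      ∀ (σ' : Equiv.Perm (Fin m)) (π' : Equiv.Perm (Fin n)), f σ π ≤ f σ' π' := by
  have hdconst : ∀ π : Equiv.Perm (Fin n), (∑ k, d k (π k)) = (∑ k, s k) + ∑ k, t k := by
    intro π
    simp only [hd]
    rw [Finset.sum_add_distrib]
    congr 1
    exact Equiv.sum_comp π t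
  obtain ⟨σ₀, hσ₀⟩ := Finite.exists_min
    (fun σ : Equiv.Perm (Fin m) => min (f σ πmin) (f σ πmax))
  have key : ∀ (σ' : Equiv.Perm (Fin m)) (π' : Equiv.Perm (Fin n)),
      min (f σ' πmin) (f σ' πmax) ≤ f σ' π' := by
    intro σ' π'
    rcases le_or_gt 0 (∑ i, a i (σ' i)) with hA | hA
    · refine le_trans (min_le_left _ _) ?_
      rw [hf, hf, hdconst, hdconst]
      have := mul_le_mul_of_nonneg_left (hmin π') hA
      linarith
    · refine le_trans (min_le_right _ _) ?_
      rw [hf, hf, hdconst, hdconst]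
      have := mul_le_mul_of_nonpos_left (hmax π') hA.le
      linarith
  rcases le_total (f σ₀ πmin) (f σ₀ πmax) with h | h
  · exact ⟨σ₀, πmin, Or.inl rfl, fun σ' π' =>
      le_trans ((min_eq_left h) ▸ hσ₀ σ') (key σ' π')⟩
  · exact ⟨σ₀, πmax, Or.inr rfl, fun σ' π' =>
      le_trans ((min_eq_right h) ▸ hσ₀ σ') (key σ' π')⟩
end

section
/- Let x̄ be an m×m doubly stochastic matrix and ȳ an n×n doubly stochastic matrix, and define F(x,y) = Σ_{i,j,k,ℓ} q(i,j,k,ℓ)·x(i,j)·y(k,ℓ) + Σ_{i,j} c(i,j)·x(i,j) + Σ_{k,ℓ} d(k,ℓ)·y(k,ℓ). Then there exist permutation matrices x* (m×m) and y* (n×n) such that F(x*,y*) ≤ F(x̄,ȳ). -/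
/-!
For fixed `y` the objective is affine in `x`, hence concave, so by Birkhoff's theorem its
minimum over the doubly stochastic matrices (the convex hull of the permutation matrices) is
attained at a permutation matrix: this gives `σ` with `F(σ, ȳ) ≤ F(x̄, ȳ)`. Freezing `σ` and
applying the same argument in `y` gives `π` with `F(σ, π) ≤ F(σ, ȳ)`.
-/

open Finset

section Birkhoff

variable {R : Type*} [Field R] [LinearOrder R] [IsStrictOrderedRing R]
  {m n : Type*} [Fintype m] [DecidableEq m] [Fintype n] [DecidableEq n]

lemma ConcaveOn.exists_permMatrix_le {f : Matrix n n R → R}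
    (hf : ConcaveOn R (doublyStochastic R n) f) {M : Matrix n n R}
    (hM : M ∈ doublyStochastic R n) : ∃ σ : Equiv.Perm n, f (σ.permMatrix R) ≤ f M := by
  rw [← SetLike.mem_coe, doublyStochastic_eq_convexHull_permMatrix] at hM
  obtain ⟨_, ⟨σ, rfl⟩, hσ⟩ := hf.exists_le_of_mem_convexHull
    (by rintro _ ⟨σ, rfl⟩; exact permMatrix_mem_doublyStochastic) hM
  exact ⟨σ, hσ⟩

lemma exists_permMatrix_permMatrix_le {G : Matrix m m R → Matrix n n R → R}
    (hG_left : ∀ y, ConcaveOn R (doublyStochastic R m) (G · y))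
    (hG_right : ∀ x, ConcaveOn R (doublyStochastic R n) (G x ·))
    {X : Matrix m m R} {Y : Matrix n n R}
    (hX : X ∈ doublyStochastic R m) (hY : Y ∈ doublyStochastic R n) :
    ∃ (σ : Equiv.Perm m) (π : Equiv.Perm n),
      G (σ.permMatrix R) (π.permMatrix R) ≤ G X Y := by
  obtain ⟨σ, hσ⟩ := (hG_left Y).exists_permMatrix_le hX
  obtain ⟨π, hπ⟩ := (hG_right (σ.permMatrix R)).exists_permMatrix_le hY
  exact ⟨σ, π, hπ.trans hσ⟩

end Birkhoff

lemma Equiv.Perm.permMatrix_eq_ite {R n : Type*} [Zero R] [One R] [DecidableEq n]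
    (σ : Equiv.Perm n) : σ.permMatrix R = fun i j => if σ i = j then 1 else 0 := by
  ext i j
  simp [PEquiv.toMatrix_apply, Equiv.toPEquiv_apply]

section BilinearAssignment

variable {R : Type*} [Field R] [LinearOrder R] [IsStrictOrderedRing R]
  {ι κ : Type*} [Fintype ι] [Fintype κ]

def bilinearAssignmentObjective (q : ι → ι → κ → κ → R) (c : ι → ι → R) (d : κ → κ → R)
    (x : Matrix ι ι R) (y : Matrix κ κ R) : R :=
  (∑ i, ∑ j, ∑ k, ∑ l, q i j k l * x i j * y k l)
    + (∑ i, ∑ j, c i j * x i j) + (∑ k, ∑ l, d k l * y k l)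

variable (q : ι → ι → κ → κ → R) (c : ι → ι → R) (d : κ → κ → R)

omit [LinearOrder R] [IsStrictOrderedRing R] in
lemma bilinearAssignmentObjective_swap (x : Matrix ι ι R) (y : Matrix κ κ R) :
    bilinearAssignmentObjective q c d x y =
      bilinearAssignmentObjective (fun k l i j => q i j k l) d c y x := by
  simp only [bilinearAssignmentObjective, mul_right_comm _ (x _ _),
    sum_comm (s := (univ : Finset ι)) (t := (univ : Finset κ))]
  ring

omit [LinearOrder R] [IsStrictOrderedRing R] in
lemma bilinearAssignmentObjective_eq_left (x : Matrix ι ι R) (y : Matrix κ κ R) :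
    bilinearAssignmentObjective q c d x y =
      (∑ i, ∑ j, ((∑ k, ∑ l, q i j k l * y k l) + c i j) * x i j)
        + ∑ k, ∑ l, d k l * y k l := by
  simp only [bilinearAssignmentObjective, add_mul, sum_mul, sum_add_distrib]
  congr! 6
  ring

lemma concaveOn_bilinearAssignmentObjective_left {s : Set (Matrix ι ι R)} (hs : Convex R s)
    (y : Matrix κ κ R) : ConcaveOn R s (bilinearAssignmentObjective q c d · y) := by
  let L : Matrix ι ι R →ₗ[R] R :=
    ∑ i, ∑ j, ((∑ k, ∑ l, q i j k l * y k l) + c i j) • Matrix.entryLinearMap R R i j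
  refine ((L.concaveOn hs).add_const (∑ k, ∑ l, d k l * y k l)).congr fun x _ => ?_
  simp [L, bilinearAssignmentObjective_eq_left]

lemma concaveOn_bilinearAssignmentObjective_right {s : Set (Matrix κ κ R)} (hs : Convex R s)
    (x : Matrix ι ι R) : ConcaveOn R s (bilinearAssignmentObjective q c d x ·) := by
  simpa only [bilinearAssignmentObjective_swap q c d x] using
    concaveOn_bilinearAssignmentObjective_left (fun k l i j => q i j k l) d c hs x

end BilinearAssignment

theorem stmt_13 (m n : ℕ)
    (q : Fin m → Fin m → Fin n → Fin n → ℝ)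
    (c : Fin m → Fin m → ℝ) (d : Fin n → Fin n → ℝ)
    (F : (Fin m → Fin m → ℝ) → (Fin n → Fin n → ℝ) → ℝ)
    (hF : ∀ x y, F x y =
      (∑ i, ∑ j, ∑ k, ∑ l, q i j k l * x i j * y k l)
      + (∑ i, ∑ j, c i j * x i j) + (∑ k, ∑ l, d k l * y k l))
    (xb : Fin m → Fin m → ℝ) (yb : Fin n → Fin n → ℝ)
    (hx_nonneg : ∀ i j, 0 ≤ xb i j)
    (hx_row : ∀ i, (∑ j, xb i j) = 1) (hx_col : ∀ j, (∑ i, xb i j) = 1)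
    (hy_nonneg : ∀ k l, 0 ≤ yb k l)
    (hy_row : ∀ k, (∑ l, yb k l) = 1) (hy_col : ∀ l, (∑ k, yb k l) = 1) :
    ∃ (σ : Equiv.Perm (Fin m)) (π : Equiv.Perm (Fin n)),
      F (fun i j => if σ i = j then 1 else 0) (fun k l => if π k = l then 1 else 0)
        ≤ F xb yb := by
  have hF' : F = bilinearAssignmentObjective q c d := funext fun x => funext (hF x)
  have hX : Matrix.of xb ∈ doublyStochastic ℝ (Fin m) :=
    mem_doublyStochastic_iff_sum.2 ⟨hx_nonneg, hx_row, hx_col⟩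
  have hY : Matrix.of yb ∈ doublyStochastic ℝ (Fin n) :=
    mem_doublyStochastic_iff_sum.2 ⟨hy_nonneg, hy_row, hy_col⟩
  obtain ⟨σ, π, h⟩ := exists_permMatrix_permMatrix_le
    (fun y => concaveOn_bilinearAssignmentObjective_left q c d convex_doublyStochastic y)
    (fun x => concaveOn_bilinearAssignmentObjective_right q c d convex_doublyStochastic x) hX hY
  refine ⟨σ, π, ?_⟩
  rw [hF', ← σ.permMatrix_eq_ite (R := ℝ), ← π.permMatrix_eq_ite (R := ℝ)]
  exact h
end

section
/- Let x̄ be an m×m doubly stochastic matrix and ȳ an n×n doubly stochastic matrix. Let x* be a permutation matrix minimizing Σ_{i,j} h(i,j)·x(i,j) over permutation matrices, where h(i,j) = c(i,j) + Σ_{k,ℓ} q(i,j,k,ℓ)·ȳ(k,ℓ); and let y* be a permutation matrix minimizing Σ_{k,ℓ} g(k,ℓ)·y(k,ℓ) over permutation matrices, where g(k,ℓ) = d(k,ℓ) + Σ_{i,j} q(i,j,k,ℓ)·x*(i,j). Then F(x*,y*) ≤ F(x̄,ȳ), where F(x,y) = Σ_{i,j,k,ℓ} q(i,j,k,ℓ)·x(i,j)·y(k,ℓ)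 + Σ_{i,j} c(i,j)·x(i,j) + Σ_{k,ℓ} d(k,ℓ)·y(k,ℓ). -/
open Finset

lemma key_lin {N : ℕ} (M : Fin N → Fin N → ℝ)
    (hnn : ∀ i j, 0 ≤ M i j) (hrow : ∀ i, (∑ j, M i j) = 1)
    (hcol : ∀ j, (∑ i, M i j) = 1)
    (h : Fin N → Fin N → ℝ) (σs : Equiv.Perm (Fin N))
    (hmin : ∀ σ : Equiv.Perm (Fin N), (∑ i, h i (σs i)) ≤ (∑ i, h i (σ i))) :
    (∑ i, h i (σs i)) ≤ ∑ i, ∑ j, h i j * M i j := by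
  have hM : (Matrix.of M) ∈ doublyStochastic ℝ (Fin N) := by
    rw [mem_doublyStochastic_iff_sum]
    exact ⟨hnn, hrow, hcol⟩
  obtain ⟨w, hw0, hw1, hwM⟩ := exists_eq_sum_perm_of_mem_doublyStochastic hM
  have hperm : ∀ (σ : Equiv.Perm (Fin N)) i j,
      (σ.permMatrix ℝ i j) = if σ i = j then 1 else 0 := by
    intro σ i j
    simp [Equiv.Perm.permMatrix, PEquiv.toMatrix_apply, Equiv.toPEquiv_apply, eq_comm]
  have hMij : ∀ i j, M i j = ∑ σ : Equiv.Perm (Fin N), w σ * (if σ i = j then 1 else 0) := by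
    intro i j
    have := congrFun (congrFun hwM i) j
    rw [show M i j = Matrix.of M i j from rfl, ← this]
    simp only [Matrix.sum_apply, Matrix.smul_apply, hperm, smul_eq_mul]
  have hrw : ∀ i, (∑ j, h i j * M i j) = ∑ σ : Equiv.Perm (Fin N), w σ * h i (σ i) := by
    intro i
    simp only [hMij, Finset.mul_sum, mul_ite, mul_one, mul_zero]
    rw [Finset.sum_comm]
    apply Finset.sum_congr rfl
    intro σ _
    simp [mul_comm]
  calc (∑ i, h i (σs i)) = ∑ σ : Equiv.Perm (Fin N), w σ * ∑ i, h i (σs i) := by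
        rw [← Finset.sum_mul, hw1, one_mul]
    _ ≤ ∑ σ : Equiv.Perm (Fin N), w σ * ∑ i, h i (σ i) := by
        apply Finset.sum_le_sum
        intro σ _
        exact mul_le_mul_of_nonneg_left (hmin σ) (hw0 σ)
    _ = ∑ i, ∑ j, h i j * M i j := by
        simp only [hrw, Finset.mul_sum]
        rw [Finset.sum_comm]

theorem stmt_14 (m n : ℕ)
    (q : Fin m → Fin m → Fin n → Fin n → ℝ)
    (c : Fin m → Fin m → ℝ) (d : Fin n → Fin n → ℝ)
    (F : (Fin m → Fin m → ℝ) → (Fin n → Fin n → ℝ) → ℝ)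
    (hF : ∀ x y, F x y =
      (∑ i, ∑ j, ∑ k, ∑ l, q i j k l * x i j * y k l)
      + (∑ i, ∑ j, c i j * x i j) + (∑ k, ∑ l, d k l * y k l))
    (xb : Fin m → Fin m → ℝ) (yb : Fin n → Fin n → ℝ)
    (hx_nonneg : ∀ i j, 0 ≤ xb i j)
    (hx_row : ∀ i, (∑ j, xb i j) = 1) (hx_col : ∀ j, (∑ i, xb i j) = 1)
    (hy_nonneg : ∀ k l, 0 ≤ yb k l)
    (hy_row : ∀ k, (∑ l, yb k l) = 1) (hy_col : ∀ l, (∑ k, yb k l) = 1)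
    (h : Fin m → Fin m → ℝ)
    (hh : ∀ i j, h i j = c i j + ∑ k, ∑ l, q i j k l * yb k l)
    (σs : Equiv.Perm (Fin m))
    (hσs : ∀ σ : Equiv.Perm (Fin m), (∑ i, h i (σs i)) ≤ (∑ i, h i (σ i)))
    (g : Fin n → Fin n → ℝ)
    (hg : ∀ k l, g k l = d k l +
      ∑ i, ∑ j, q i j k l * (if σs i = j then (1 : ℝ) else 0))
    (πs : Equiv.Perm (Fin n))
    (hπs : ∀ π : Equiv.Perm (Fin n), (∑ k, g k (πs k)) ≤ (∑ k, g k (π k))) :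
    F (fun i j => if σs i = j then 1 else 0) (fun k l => if πs k = l then 1 else 0)
      ≤ F xb yb := by
  set X : Fin m → Fin m → ℝ := fun i j => if σs i = j then 1 else 0 with hX
  set Y : Fin n → Fin n → ℝ := fun k l => if πs k = l then 1 else 0 with hY
  have hA : (∑ i, h i (σs i)) ≤ ∑ i, ∑ j, h i j * xb i j :=
    key_lin xb hx_nonneg hx_row hx_col h σs hσs
  have hB : (∑ k, g k (πs k)) ≤ ∑ k, ∑ l, g k l * yb k l :=
    key_lin yb hy_nonneg hy_row hy_col g πs hπs
  have hXcollapse : ∀ (A : Fin m → Fin m → ℝ),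
      (∑ i, ∑ j, A i j * X i j) = ∑ i, A i (σs i) := by
    intro A
    apply Finset.sum_congr rfl
    intro i _
    simp [hX, mul_ite]
  have hYcollapse : ∀ (B : Fin n → Fin n → ℝ),
      (∑ k, ∑ l, B k l * Y k l) = ∑ k, B k (πs k) := by
    intro B
    apply Finset.sum_congr rfl
    intro k _
    simp [hY, mul_ite]
  have hi : ∀ i, (∑ j, ∑ k, ∑ l, q i j k l * X i j * yb k l)
      = ∑ k, ∑ l, q i (σs i) k l * yb k l := by
    intro i
    rw [Finset.sum_eq_single (σs i)]
    · simp [hX]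
    · intro j _ hj; simp [hX, Ne.symm hj]
    · simp
  -- (1)
  have e1 : (∑ i, h i (σs i)) =
      (∑ i, ∑ j, c i j * X i j) + ∑ i, ∑ j, ∑ k, ∑ l, q i j k l * X i j * yb k l := by
    rw [hXcollapse, Finset.sum_congr rfl (fun i _ => hi i), ← Finset.sum_add_distrib]
    apply Finset.sum_congr rfl
    intro i _
    exact hh i (σs i)
  -- (2)
  have e2 : (∑ i, ∑ j, h i j * xb i j) =
      (∑ i, ∑ j, ∑ k, ∑ l, q i j k l * xb i j * yb k l) + ∑ i, ∑ j, c i j * xb i j := by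
    rw [← Finset.sum_add_distrib]
    apply Finset.sum_congr rfl
    intro i _
    rw [← Finset.sum_add_distrib]
    apply Finset.sum_congr rfl
    intro j _
    rw [hh, add_mul, add_comm, Finset.sum_mul]
    congr 1
    apply Finset.sum_congr rfl
    intro k _
    rw [Finset.sum_mul]
    apply Finset.sum_congr rfl
    intro l _
    ring
  -- (3)
  have e3 : (∑ k, g k (πs k)) =
      (∑ k, ∑ l, d k l * Y k l) + ∑ i, ∑ j, ∑ k, ∑ l, q i j k l * X i j * Y k l := by
    have c2 : (∑ i, ∑ j, ∑ k, ∑ l, q i j k l * X i j * Y k l)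
        = ∑ k, ∑ i, q i (σs i) k (πs k) := by
      have hi2 : ∀ i, (∑ j, ∑ k, ∑ l, q i j k l * X i j * Y k l)
          = ∑ k, q i (σs i) k (πs k) := by
        intro i
        rw [Finset.sum_eq_single (σs i)]
        · apply Finset.sum_congr rfl
          intro k _
          rw [Finset.sum_eq_single (πs k)]
          · simp [hX, hY]
          · intro l _ hl; simp [hY, Ne.symm hl]
          · simp
        · intro j _ hj; simp [hX, Ne.symm hj]
        · simp
      rw [Finset.sum_congr rfl (fun i _ => hi2 i)]
      exact Finset.sum_comm
    rw [c2, hYcollapse, ← Finset.sum_add_distrib]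
    apply Finset.sum_congr rfl
    intro k _
    rw [hg]
    congr 1
    simp [hX, mul_ite]
  -- (4)
  have e4 : (∑ k, ∑ l, g k l * yb k l) =
      (∑ k, ∑ l, d k l * yb k l) + ∑ i, ∑ j, ∑ k, ∑ l, q i j k l * X i j * yb k l := by
    have c3 : (∑ i, ∑ j, ∑ k, ∑ l, q i j k l * X i j * yb k l)
        = ∑ k, ∑ l, ∑ i, q i (σs i) k l * yb k l := by
      rw [Finset.sum_congr rfl (fun i _ => hi i)]
      rw [Finset.sum_comm]
      exact Finset.sum_congr rfl fun k _ => Finset.sum_comm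
    rw [c3, ← Finset.sum_add_distrib]
    apply Finset.sum_congr rfl
    intro k _
    rw [← Finset.sum_add_distrib]
    apply Finset.sum_congr rfl
    intro l _
    rw [hg, add_mul]
    congr 1
    rw [Finset.sum_mul]
    apply Finset.sum_congr rfl
    intro i _
    rw [Finset.sum_mul]
    simp [hX, mul_ite, ite_mul]
  rw [hF, hF]
  calc (∑ i, ∑ j, ∑ k, ∑ l, q i j k l * X i j * Y k l) + (∑ i, ∑ j, c i j * X i j)
        + (∑ k, ∑ l, d k l * Y k l)
      = (∑ k, g k (πs k)) + ∑ i, ∑ j, c i j * X i j := by rw [e3]; ring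
    _ ≤ (∑ k, ∑ l, g k l * yb k l) + ∑ i, ∑ j, c i j * X i j := by linarith
    _ = (∑ i, h i (σs i)) + ∑ k, ∑ l, d k l * yb k l := by rw [e4, e1]; ring
    _ ≤ (∑ i, ∑ j, h i j * xb i j) + ∑ k, ∑ l, d k l * yb k l := by linarith
    _ = (∑ i, ∑ j, ∑ k, ∑ l, q i j k l * xb i j * yb k l) + (∑ i, ∑ j, c i j * xb i j)
        + (∑ k, ∑ l, d k l * yb k l) := by rw [e2]
end

section
/- Fix an equivalence class S under the cyclic-shift relation ~ (as defined by translating σ by a ∈ ℤ/mℤ and π by b ∈ ℤ/nℤ). Then for every i,j ∈ ℤ/mℤ and k,ℓ ∈ ℤ/nℤ, there is exactly one pair (σ,π) ∈ S with σ(i) = j and π(k) = ℓ. Consequently Σ_{(σ,π) ∈ S} f(σ,π) = Σ_{i,j,k,ℓ} q(i,j,k,ℓ) + n·Σ_{i,j} c(i,j) + m·Σ_{k,ℓ} d(k,ℓ) = m·n·A, where A is the average of f over all m!·n! pairs. -/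
open scoped Classical

lemma sum_addLeft_aux {α : Type*} [AddGroup α] [Fintype α] (x : α) (g : α → ℝ) :
    ∑ a, g (x + a) = ∑ j, g j := Equiv.sum_comp (Equiv.addLeft x) g

lemma sum_perm_apply_aux {α : Type*} [Fintype α] [DecidableEq α] (g : α → ℝ) (i : α) :
    (Fintype.card α : ℝ) * ∑ σ : Equiv.Perm α, g (σ i) =
      (Nat.factorial (Fintype.card α) : ℝ) * ∑ j, g j := by
  have key : ∀ i' : α, ∑ σ : Equiv.Perm α, g (σ i') = ∑ σ : Equiv.Perm α, g (σ i) := by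
    intro i'
    refine Fintype.sum_equiv (Equiv.mulRight (Equiv.swap i i')) _ _ fun σ => ?_
    simp [Equiv.Perm.mul_apply]
  calc (Fintype.card α : ℝ) * ∑ σ : Equiv.Perm α, g (σ i)
      = ∑ i' : α, ∑ σ : Equiv.Perm α, g (σ i') := by
        rw [Finset.sum_congr rfl fun i' _ => key i', Finset.sum_const, nsmul_eq_mul,
          Finset.card_univ]
    _ = ∑ σ : Equiv.Perm α, ∑ i' : α, g (σ i') := Finset.sum_comm
    _ = ∑ σ : Equiv.Perm α, ∑ j, g j := Finset.sum_congr rfl fun σ _ => Equiv.sum_comp σ g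
    _ = _ := by rw [Finset.sum_const, nsmul_eq_mul, Finset.card_univ, Fintype.card_perm]

lemma sum_perm_zmod_aux (m : ℕ) [NeZero m] (g : ZMod m → ℝ) (i : ZMod m) :
    (m : ℝ) * ∑ σ : Equiv.Perm (ZMod m), g (σ i) =
      (Nat.factorial m : ℝ) * ∑ j, g j := by
  have := sum_perm_apply_aux g i
  rwa [ZMod.card] at this

theorem stmt_17 (m n : ℕ) [NeZero m] [NeZero n]
    (q : ZMod m → ZMod m → ZMod n → ZMod n → ℝ)
    (c : ZMod m → ZMod m → ℝ) (d : ZMod n → ZMod n → ℝ)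
    (f : Equiv.Perm (ZMod m) → Equiv.Perm (ZMod n) → ℝ)
    (hf : ∀ σ π, f σ π =
      (∑ i, ∑ k, q i (σ i) k (π k)) + (∑ i, c i (σ i)) + (∑ k, d k (π k)))
    (A : ℝ)
    (hA : A = (∑ σ : Equiv.Perm (ZMod m), ∑ π : Equiv.Perm (ZMod n), f σ π)
        / ((Nat.factorial m * Nat.factorial n : ℕ) : ℝ))
    (σ0 : Equiv.Perm (ZMod m)) (π0 : Equiv.Perm (ZMod n))
    (R : Equiv.Perm (ZMod m) × Equiv.Perm (ZMod n) → Prop)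
    (hR : ∀ p, R p ↔ ∃ (a : ZMod m) (b : ZMod n),
      (∀ i, p.1 i = σ0 i + a) ∧ (∀ k, p.2 k = π0 k + b)) :
    (∀ (i j : ZMod m) (k l : ZMod n),
      ∃! p : Equiv.Perm (ZMod m) × Equiv.Perm (ZMod n),
        R p ∧ p.1 i = j ∧ p.2 k = l)
    ∧ (∑ p ∈ Finset.univ.filter R, f p.1 p.2)
        = (∑ i, ∑ j, ∑ k, ∑ l, q i j k l)
          + (n : ℝ) * (∑ i, ∑ j, c i j) + (m : ℝ) * (∑ k, ∑ l, d k l)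
    ∧ (∑ p ∈ Finset.univ.filter R, f p.1 p.2) = (m : ℝ) * (n : ℝ) * A := by
  set Φ : ZMod m → Equiv.Perm (ZMod m) := fun a => σ0.trans (Equiv.addRight a) with hΦ
  set Ψ : ZMod n → Equiv.Perm (ZMod n) := fun b => π0.trans (Equiv.addRight b) with hΨ
  have hΦa : ∀ a i, Φ a i = σ0 i + a := fun a i => rfl
  have hΨb : ∀ b k, Ψ b k = π0 k + b := fun b k => rfl
  have hRΦ : ∀ a b, R (Φ a, Ψ b) := fun a b => (hR _).mpr ⟨a, b, fun i => rfl, fun k => rfl⟩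
  -- Part 1: unique representative with prescribed values
  have huniq : ∀ (i j : ZMod m) (k l : ZMod n),
      ∃! p : Equiv.Perm (ZMod m) × Equiv.Perm (ZMod n),
        R p ∧ p.1 i = j ∧ p.2 k = l := by
    intro i j k l
    refine ⟨(Φ (j - σ0 i), Ψ (l - π0 k)), ⟨hRΦ _ _, by simp [hΦa], by simp [hΨb]⟩, ?_⟩
    rintro ⟨σ, π⟩ ⟨hr, h1, h2⟩
    obtain ⟨a, b, ha, hb⟩ := (hR _).mp hr
    have haa : a = j - σ0 i := by
      have := ha i; simp only at this; rw [h1] at this; rw [this]; ring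
    have hbb : b = l - π0 k := by
      have := hb k; simp only at this; rw [h2] at this; rw [this]; ring
    refine Prod.ext (Equiv.ext fun x => ?_) (Equiv.ext fun x => ?_)
    · have := ha x; simp only at this ⊢; rw [this, haa, hΦa]
    · have := hb x; simp only at this ⊢; rw [this, hbb, hΨb]
  -- the class sum as a double sum over shifts
  have hsum : (∑ p ∈ Finset.univ.filter R, f p.1 p.2)
      = ∑ a : ZMod m, ∑ b : ZMod n, f (Φ a) (Ψ b) := by
    have hrw : (∑ a : ZMod m, ∑ b : ZMod n, f (Φ a) (Ψ b))
        = ∑ x : ZMod m × ZMod n, f (Φ x.1) (Ψ x.2) :=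
      (Fintype.sum_prod_type (f := fun x => f (Φ x.1) (Ψ x.2))).symm
    rw [hrw]
    refine (Finset.sum_bij (fun x _ => (Φ x.1, Ψ x.2)) ?_ ?_ ?_ ?_).symm
    · intro x _; simp [Finset.mem_filter, hRΦ]
    · rintro ⟨a, b⟩ _ ⟨a', b'⟩ _ h
      have h1 := congrArg (fun p => p.1 (0 : ZMod m)) h
      have h2 := congrArg (fun p => p.2 (0 : ZMod n)) h
      simp only [hΦa, hΨb] at h1 h2
      exact Prod.ext (by exact add_left_cancel h1) (by exact add_left_cancel h2)
    · rintro ⟨σ, π⟩ hp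
      obtain ⟨a, b, ha, hb⟩ := (hR _).mp ((Finset.mem_filter.mp hp).2)
      exact ⟨(a, b), Finset.mem_univ _, Prod.ext (Equiv.ext fun i => (ha i).symm)
        (Equiv.ext fun k => (hb k).symm)⟩
    · intro x _; rfl
  -- Part 2: value of the class sum
  have hclass : (∑ a : ZMod m, ∑ b : ZMod n, f (Φ a) (Ψ b))
      = (∑ i, ∑ j, ∑ k, ∑ l, q i j k l)
        + (n : ℝ) * (∑ i, ∑ j, c i j) + (m : ℝ) * (∑ k, ∑ l, d k l) := by
    have hfab : ∀ (a : ZMod m) (b : ZMod n), f (Φ a) (Ψ b)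
        = (∑ i, ∑ k, q i (σ0 i + a) k (π0 k + b)) + (∑ i, c i (σ0 i + a))
          + (∑ k, d k (π0 k + b)) := by
      intro a b; rw [hf]; simp only [hΦa, hΨb]
    have hT1 : ∑ a : ZMod m, ∑ b : ZMod n, ∑ i, ∑ k, q i (σ0 i + a) k (π0 k + b)
        = ∑ i, ∑ j, ∑ k, ∑ l, q i j k l := by
      have step1 : ∀ a : ZMod m,
          ∑ b : ZMod n, ∑ i, ∑ k, q i (σ0 i + a) k (π0 k + b)
            = ∑ i, ∑ k, ∑ l, q i (σ0 i + a) k l := by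
        intro a
        rw [Finset.sum_comm]
        refine Finset.sum_congr rfl fun i _ => ?_
        rw [Finset.sum_comm]
        exact Finset.sum_congr rfl fun k _ => sum_addLeft_aux (π0 k) _
      rw [Finset.sum_congr rfl fun a _ => step1 a, Finset.sum_comm]
      refine Finset.sum_congr rfl fun i _ => ?_
      exact sum_addLeft_aux (σ0 i) (fun j => ∑ k, ∑ l, q i j k l)
    have hT2 : ∑ a : ZMod m, ∑ b : ZMod n, ∑ i, c i (σ0 i + a)
        = (n : ℝ) * ∑ i, ∑ j, c i j := by
      have : ∀ a : ZMod m, ∑ b : ZMod n, ∑ i, c i (σ0 i + a)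
          = (n : ℝ) * ∑ i, c i (σ0 i + a) := by
        intro a
        rw [Finset.sum_const, Finset.card_univ, ZMod.card, nsmul_eq_mul]
      rw [Finset.sum_congr rfl fun a _ => this a, ← Finset.mul_sum, Finset.sum_comm]
      congr 1
      exact Finset.sum_congr rfl fun i _ => sum_addLeft_aux (σ0 i) (c i)
    have hT3 : ∑ a : ZMod m, ∑ b : ZMod n, ∑ k, d k (π0 k + b)
        = (m : ℝ) * ∑ k, ∑ l, d k l := by
      have : ∀ a : ZMod m, ∑ b : ZMod n, ∑ k, d k (π0 k + b) = ∑ k, ∑ l, d k l := by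
        intro a
        rw [Finset.sum_comm]
        exact Finset.sum_congr rfl fun k _ => sum_addLeft_aux (π0 k) (d k)
      rw [Finset.sum_congr rfl fun a _ => this a, Finset.sum_const, Finset.card_univ,
        ZMod.card, nsmul_eq_mul]
    calc ∑ a : ZMod m, ∑ b : ZMod n, f (Φ a) (Ψ b)
        = ∑ a : ZMod m, ∑ b : ZMod n,
            ((∑ i, ∑ k, q i (σ0 i + a) k (π0 k + b)) + (∑ i, c i (σ0 i + a))
              + (∑ k, d k (π0 k + b))) := by
          exact Finset.sum_congr rfl fun a _ => Finset.sum_congr rfl fun b _ => hfab a b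
      _ = (∑ a : ZMod m, ∑ b : ZMod n, ∑ i, ∑ k, q i (σ0 i + a) k (π0 k + b))
          + (∑ a : ZMod m, ∑ b : ZMod n, ∑ i, c i (σ0 i + a))
          + (∑ a : ZMod m, ∑ b : ZMod n, ∑ k, d k (π0 k + b)) := by
          simp only [← Finset.sum_add_distrib]
      _ = _ := by rw [hT1, hT2, hT3]
  -- total sum identity
  have htotal : (m : ℝ) * (n : ℝ) *
      (∑ σ : Equiv.Perm (ZMod m), ∑ π : Equiv.Perm (ZMod n), f σ π)
      = (Nat.factorial m : ℝ) * (Nat.factorial n : ℝ) *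
        ((∑ i, ∑ j, ∑ k, ∑ l, q i j k l)
          + (n : ℝ) * (∑ i, ∑ j, c i j) + (m : ℝ) * (∑ k, ∑ l, d k l)) := by
    set X := ∑ σ : Equiv.Perm (ZMod m), ∑ π : Equiv.Perm (ZMod n),
        ∑ i, ∑ k, q i (σ i) k (π k) with hX
    set Y := ∑ σ : Equiv.Perm (ZMod m), ∑ i, c i (σ i) with hY
    set Sd := ∑ π : Equiv.Perm (ZMod n), ∑ k, d k (π k) with hSd
    have hT : (∑ σ : Equiv.Perm (ZMod m), ∑ π : Equiv.Perm (ZMod n), f σ π)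
        = X + (Nat.factorial n : ℝ) * Y + (Nat.factorial m : ℝ) * Sd := by
      calc ∑ σ : Equiv.Perm (ZMod m), ∑ π : Equiv.Perm (ZMod n), f σ π
          = ∑ σ : Equiv.Perm (ZMod m), ((∑ π : Equiv.Perm (ZMod n),
                ∑ i, ∑ k, q i (σ i) k (π k))
              + (Nat.factorial n : ℝ) * (∑ i, c i (σ i))
              + (∑ π : Equiv.Perm (ZMod n), ∑ k, d k (π k))) := by
            refine Finset.sum_congr rfl fun σ _ => ?_
            rw [Finset.sum_congr rfl fun π (_ : π ∈ Finset.univ) => hf σ π,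
              Finset.sum_add_distrib, Finset.sum_add_distrib]
            congr 1
            congr 1
            rw [Finset.sum_const, Finset.card_univ, Fintype.card_perm, ZMod.card,
              nsmul_eq_mul]
        _ = X + (Nat.factorial n : ℝ) * Y + (Nat.factorial m : ℝ) * Sd := by
            rw [Finset.sum_add_distrib, Finset.sum_add_distrib]
            congr 1
            · congr 1
              rw [← Finset.mul_sum]
            · rw [Finset.sum_const, Finset.card_univ, Fintype.card_perm, ZMod.card,
                nsmul_eq_mul]
    have h1 : (m : ℝ) * Y = (Nat.factorial m : ℝ) * ∑ i, ∑ j, c i j := by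
      rw [hY, Finset.sum_comm, Finset.mul_sum, Finset.mul_sum]
      exact Finset.sum_congr rfl fun i _ => sum_perm_zmod_aux m (c i) i
    have h2 : (n : ℝ) * Sd = (Nat.factorial n : ℝ) * ∑ k, ∑ l, d k l := by
      rw [hSd, Finset.sum_comm, Finset.mul_sum, Finset.mul_sum]
      exact Finset.sum_congr rfl fun k _ => sum_perm_zmod_aux n (d k) k
    have h3 : (m : ℝ) * (n : ℝ) * X
        = (Nat.factorial m : ℝ) * (Nat.factorial n : ℝ) * ∑ i, ∑ j, ∑ k, ∑ l, q i j k l := by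
      have inner : ∀ σ : Equiv.Perm (ZMod m),
          (n : ℝ) * ∑ π : Equiv.Perm (ZMod n), ∑ i, ∑ k, q i (σ i) k (π k)
            = (Nat.factorial n : ℝ) * ∑ i, ∑ k, ∑ l, q i (σ i) k l := by
        intro σ
        rw [Finset.sum_comm, Finset.mul_sum, Finset.mul_sum]
        refine Finset.sum_congr rfl fun i _ => ?_
        rw [Finset.sum_comm, Finset.mul_sum, Finset.mul_sum]
        exact Finset.sum_congr rfl fun k _ => sum_perm_zmod_aux n (fun l => q i (σ i) k l) k
      have houter : (m : ℝ) * ∑ σ : Equiv.Perm (ZMod m), ∑ i, ∑ k, ∑ l, q i (σ i) k l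
          = (Nat.factorial m : ℝ) * ∑ i, ∑ j, ∑ k, ∑ l, q i j k l := by
        rw [Finset.sum_comm, Finset.mul_sum, Finset.mul_sum]
        exact Finset.sum_congr rfl fun i _ =>
          sum_perm_zmod_aux m (fun j => ∑ k, ∑ l, q i j k l) i
      calc (m : ℝ) * (n : ℝ) * X
          = (m : ℝ) * ∑ σ : Equiv.Perm (ZMod m),
              ((n : ℝ) * ∑ π : Equiv.Perm (ZMod n), ∑ i, ∑ k, q i (σ i) k (π k)) := by
            rw [hX, mul_assoc, Finset.mul_sum]
        _ = (m : ℝ) * ∑ σ : Equiv.Perm (ZMod m),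
              ((Nat.factorial n : ℝ) * ∑ i, ∑ k, ∑ l, q i (σ i) k l) := by
            rw [Finset.sum_congr rfl fun σ _ => inner σ]
        _ = (Nat.factorial n : ℝ) * ((m : ℝ) *
              ∑ σ : Equiv.Perm (ZMod m), ∑ i, ∑ k, ∑ l, q i (σ i) k l) := by
            rw [← Finset.mul_sum]; ring
        _ = _ := by rw [houter]; ring
    rw [hT]
    linear_combination ((n : ℝ) * (Nat.factorial n : ℝ)) * h1
      + ((m : ℝ) * (Nat.factorial m : ℝ)) * h2 + h3
  -- assemble
  refine ⟨huniq, by rw [hsum, hclass], ?_⟩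
  rw [hsum, hclass, hA]
  have hfacm : (Nat.factorial m : ℝ) ≠ 0 := Nat.cast_ne_zero.mpr m.factorial_ne_zero
  have hfacn : (Nat.factorial n : ℝ) ≠ 0 := Nat.cast_ne_zero.mpr n.factorial_ne_zero
  push_cast
  rw [mul_div_assoc']
  rw [eq_div_iff (mul_ne_zero hfacm hfacn)]
  linear_combination -htotal
end

section
/- The domination bound (m-1)!·(n-1)! is tight: let q(i,j,k,ℓ) = 1 if (i,j,k,ℓ) = (i',j',k',ℓ') for a fixed quadruple, and 0 otherwise, with c = 0 and d = 0. Then the average objective value is A = 1/(mn), and the number of permutation pairs (σ,π) with f(σ,π) ≥ A is exactly (m-1)!·(n-1)! (namely those with σ(i') = j' and π(k') = ℓ'). -/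
/-!
With a single nonzero coefficient, `f σ π` is the indicator of `σ i' = j' ∧ π k' = l'`. Each of these
conditions fixes one value of a permutation, which leaves `(m - 1)!` resp. `(n - 1)!` choices
(the fibres of `σ ↦ σ a` are translates of each other, so all have size `m! / m`). Hence the
average is `(m - 1)! (n - 1)! / (m! n!) = 1 / (mn)`, which lies in `(0, 1]`, so `f ≥ A` exactly
on the support of the indicator.
-/

open Finset Equiv Nat

section
variable {α : Type*} [Fintype α] [DecidableEq α]

lemma Equiv.Perm.card_filter_apply_eq_congr (a b c : α) :
    #{σ : Perm α | σ a = b} = #{σ : Perm α | σ a = c} :=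
  Finset.card_equiv (Equiv.mulLeft (swap b c)) fun σ => by
    simpa [Perm.mul_apply] using ((swap b c).injective.eq_iff (b := b)).symm

lemma Equiv.Perm.card_filter_apply_eq (a b : α) :
    #{σ : Perm α | σ a = b} = (Fintype.card α - 1)! := by
  have hfib : (Fintype.card α)! = Fintype.card α * #{σ : Perm α | σ a = b} := by
    rw [← Fintype.card_perm, ← Finset.card_univ,
      Finset.card_eq_sum_card_fiberwise (f := fun σ : Perm α => σ a) (t := univ)
        (fun _ _ => mem_univ _)]
    simp only [Perm.card_filter_apply_eq_congr a _ b, sum_const, smul_eq_mul]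
    rfl
  have hpos : 0 < Fintype.card α := Fintype.card_pos_iff.mpr ⟨a⟩
  rw [← Nat.mul_factorial_pred hpos.ne'] at hfib
  exact (Nat.eq_of_mul_eq_mul_left hpos hfib).symm
end

lemma sum_sum_ite_eq_and {ι κ β γ R : Type*} [Fintype ι] [Fintype κ] [DecidableEq ι]
    [DecidableEq κ] [DecidableEq β] [DecidableEq γ] [AddCommMonoidWithOne R]
    (g : ι → β) (h : κ → γ) (i₀ : ι) (k₀ : κ) (b : β) (c : γ) :
    ∑ i, ∑ k, (if i = i₀ ∧ g i = b ∧ k = k₀ ∧ h k = c then 1 else 0 : R) =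
      if g i₀ = b ∧ h k₀ = c then 1 else 0 := by
  simp [ite_and]

lemma le_ite_one_zero_iff {R : Type*} [Zero R] [One R] [Preorder R] {a : R} (h₀ : 0 < a)
    (h₁ : a ≤ 1) (P : Prop) [Decidable P] :
    (a ≤ if P then 1 else 0) ↔ P := by
  split_ifs with hP
  · simpa [hP] using h₁
  · simpa [hP] using h₀.not_ge

theorem stmt_18_general (m n : ℕ)
    (i' j' : Fin m) (k' l' : Fin n)
    (q : Fin m → Fin m → Fin n → Fin n → ℝ)
    (hq : ∀ i j k l, q i j k l =
      if i = i' ∧ j = j' ∧ k = k' ∧ l = l' then 1 else 0)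
    (f : Equiv.Perm (Fin m) → Equiv.Perm (Fin n) → ℝ)
    (hf : ∀ σ π, f σ π = ∑ i, ∑ k, q i (σ i) k (π k))
    (A : ℝ)
    (hA : A = (∑ σ : Equiv.Perm (Fin m), ∑ π : Equiv.Perm (Fin n), f σ π)
        / ((Nat.factorial m * Nat.factorial n : ℕ) : ℝ)) :
    A = 1 / ((m * n : ℕ) : ℝ)
    ∧ (Finset.univ.filter
        (fun p : Equiv.Perm (Fin m) × Equiv.Perm (Fin n) => A ≤ f p.1 p.2)).card
      = Nat.factorial (m - 1) * Nat.factorial (n - 1)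
    ∧ (Finset.univ.filter
        (fun p : Equiv.Perm (Fin m) × Equiv.Perm (Fin n) => A ≤ f p.1 p.2))
      = (Finset.univ.filter
        (fun p : Equiv.Perm (Fin m) × Equiv.Perm (Fin n) =>
          p.1 i' = j' ∧ p.2 k' = l')) := by
  set S := (univ : Finset (Perm (Fin m) × Perm (Fin n))).filter
    fun p => p.1 i' = j' ∧ p.2 k' = l'
  have hf' : ∀ σ π, f σ π = if σ i' = j' ∧ π k' = l' then 1 else 0 := fun σ π => by
    simp only [hf, hq, sum_sum_ite_eq_and]
  have hS : #S = (m - 1)! * (n - 1)! := by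
    have hprod : S = (univ.filter fun σ : Perm (Fin m) => σ i' = j') ×ˢ
        (univ.filter fun π : Perm (Fin n) => π k' = l') := by
      ext; simp [S]
    rw [hprod, card_product, Perm.card_filter_apply_eq, Perm.card_filter_apply_eq, Fintype.card_fin,
      Fintype.card_fin]
  have hm : 0 < m := i'.pos
  have hn : 0 < n := k'.pos
  have hA' : A = 1 / ((m * n : ℕ) : ℝ) := by
    rw [hA, ← Fintype.sum_prod_type']
    simp only [hf', sum_boole]
    rw [hS, ← Nat.mul_factorial_pred hm.ne', ← Nat.mul_factorial_pred hn.ne']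
    push_cast
    field_simp
  have hA_pos : 0 < A := by rw [hA']; positivity
  have hA_le_one : A ≤ 1 := by
    rw [hA', div_le_one (by positivity)]
    exact_mod_cast Nat.one_le_iff_ne_zero.mpr (Nat.mul_pos hm hn).ne'
  have hfilter : (univ.filter fun p : Perm (Fin m) × Perm (Fin n) => A ≤ f p.1 p.2) = S :=
    filter_congr fun p _ => by rw [hf', le_ite_one_zero_iff hA_pos hA_le_one]
  exact ⟨hA', hfilter ▸ hS, hfilter⟩

theorem stmt_18 (m n : ℕ) (hm : 0 < m) (hn : 0 < n)
    (i' j' : Fin m) (k' l' : Fin n)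
    (q : Fin m → Fin m → Fin n → Fin n → ℝ)
    (hq : ∀ i j k l, q i j k l =
      if i = i' ∧ j = j' ∧ k = k' ∧ l = l' then 1 else 0)
    (f : Equiv.Perm (Fin m) → Equiv.Perm (Fin n) → ℝ)
    (hf : ∀ σ π, f σ π = ∑ i, ∑ k, q i (σ i) k (π k))
    (A : ℝ)
    (hA : A = (∑ σ : Equiv.Perm (Fin m), ∑ π : Equiv.Perm (Fin n), f σ π)
        / ((Nat.factorial m * Nat.factorial n : ℕ) : ℝ)) :
    A = 1 / ((m * n : ℕ) : ℝ)
    ∧ (Finset.univ.filter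
        (fun p : Equiv.Perm (Fin m) × Equiv.Perm (Fin n) => A ≤ f p.1 p.2)).card
      = Nat.factorial (m - 1) * Nat.factorial (n - 1)
    ∧ (Finset.univ.filter
        (fun p : Equiv.Perm (Fin m) × Equiv.Perm (Fin n) => A ≤ f p.1 p.2))
      = (Finset.univ.filter
        (fun p : Equiv.Perm (Fin m) × Equiv.Perm (Fin n) =>
          p.1 i' = j' ∧ p.2 k' = l')) :=
  stmt_18_general m n i' j' k' l' q hq f hf A hA
end
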